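/- arXiv:1701.09152 — 13 statements merged into one kernel-verified Lean document; each statement's English description precedes it below -/
import Mathlib

section
/- Let H be a unit-cancellative monoid satisfying the ACCP. Then H is atomic, i.e., every non-unit of H can be written as a finite product of atoms of H. -/
/-!
Choose a non-unit `a` that is not a product of atoms with `aH` maximal among such elements.
Dually, among the non-unit right factors `c` of `a = b * c` with `b` a non-unit, one with `Hc`
maximal is an atom. Then `b` is again a non-unit that is not a product of atoms, while
`aH = bcH ⊊ bH`, contradicting the choice of `a`. Unit-cancellativity makes these inclusions
strict and gives `IsUnit (x * y) ↔ IsUnit x ∧ IsUnit y`.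
-/

def IsAtomIn {H : Type*} [Monoid H] (a : H) : Prop :=
  ¬ IsUnit a ∧ ∀ x y : H, a = x * y → IsUnit x ∨ IsUnit y

def IsUnitCancellative (H : Type*) [Monoid H] : Prop :=
  ∀ x y : H, (x * y = x ∨ y * x = x) → IsUnit y

theorem wellFounded_invImage_ssuperset {α β : Type*} (I : α → Set β)
    (hacc : ∀ a : ℕ → α, (∀ n, I (a n) ⊆ I (a (n + 1))) →
      ∃ N, ∀ n, N ≤ n → I (a n) = I (a N)) :
    WellFounded (InvImage (· ⊃ ·) I) := by
  refine wellFounded_iff_isEmpty_descending_chain.mpr ⟨fun ⟨a, ha⟩ => ?_⟩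
  obtain ⟨N, hN⟩ := hacc a fun n => (ha n).subset
  exact (ha N).ne (hN (N + 1) N.le_succ).symm

namespace IsUnitCancellative

variable {H : Type*} [Monoid H]

theorem isDedekindFiniteMonoid (huc : IsUnitCancellative H) : IsDedekindFiniteMonoid H where
  mul_eq_one_symm {a b} hab := by
    have hba : IsUnit (b * a) := huc b (b * a) (.inr (by rw [mul_assoc, hab, mul_one]))
    -- `b * a` is an idempotent unit
    exact hba.mul_eq_left.mp (by rw [mul_assoc, ← mul_assoc a, hab, one_mul])

theorem rightIdeal_mul_ssubset (huc : IsUnitCancellative H) (b : H) {c : H} (hc : ¬IsUnit c) :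
    {z : H | ∃ r, z = b * c * r} ⊂ {z : H | ∃ r, z = b * r} := by
  have := huc.isDedekindFiniteMonoid
  refine ⟨fun z ⟨r, hz⟩ => ⟨c * r, by rw [hz, mul_assoc]⟩, fun hsub => hc ?_⟩
  obtain ⟨r, hr⟩ := hsub ⟨1, (mul_one b).symm⟩
  exact isUnit_of_mul_isUnit_left (huc b (c * r) (.inl (by rw [← mul_assoc, ← hr])))

theorem leftIdeal_mul_ssubset (huc : IsUnitCancellative H) {b : H} (hb : ¬IsUnit b) (c : H) :
    {z : H | ∃ r, z = r * (b * c)} ⊂ {z : H | ∃ r, z = r * c} := by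
  have := huc.isDedekindFiniteMonoid
  refine ⟨fun z ⟨r, hz⟩ => ⟨r * b, by rw [hz, mul_assoc]⟩, fun hsub => hb ?_⟩
  obtain ⟨r, hr⟩ := hsub ⟨1, (one_mul c).symm⟩
  exact isUnit_of_mul_isUnit_right (huc c (r * b) (.inr (by rw [mul_assoc, ← hr])))

end IsUnitCancellative

section Factorization

variable {H : Type*} [Monoid H]

def IsAtomProduct (x : H) : Prop :=
  ∃ l : List H, l ≠ [] ∧ (∀ a ∈ l, IsAtomIn a) ∧ l.prod = x

theorem IsAtomIn.isAtomProduct {a : H} (ha : IsAtomIn a) : IsAtomProduct a :=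
  ⟨[a], List.cons_ne_nil a [], by simpa using ha, List.prod_singleton⟩

theorem IsAtomProduct.mul_atom {x c : H} (hx : IsAtomProduct x) (hc : IsAtomIn c) :
    IsAtomProduct (x * c) := by
  obtain ⟨l, hl, hatoms, rfl⟩ := hx
  refine ⟨l ++ [c], by simp, fun a ha => ?_, by simp⟩
  rcases List.mem_append.mp ha with ha | ha
  · exact hatoms a ha
  · exact List.mem_singleton.mp ha ▸ hc

theorem exists_eq_mul_atom_of_not_isAtomIn (huc : IsUnitCancellative H)
    (haccL : ∀ a : ℕ → H,
      (∀ n, {z : H | ∃ r, z = r * a n} ⊆ {z : H | ∃ r, z = r * a (n + 1)}) →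
      ∃ N, ∀ n, N ≤ n → {z : H | ∃ r, z = r * a n} = {z : H | ∃ r, z = r * a N})
    {a : H} (ha : ¬IsUnit a) (ha' : ¬IsAtomIn a) :
    ∃ b c, ¬IsUnit b ∧ IsAtomIn c ∧ a = b * c := by
  have := huc.isDedekindFiniteMonoid
  let T : Set H := {c | ¬IsUnit c ∧ ∃ b, ¬IsUnit b ∧ a = b * c}
  have hT : T.Nonempty := by
    simp only [IsAtomIn, ha, not_false_eq_true, true_and, not_forall, not_or] at ha'
    obtain ⟨b, c, hbc, hb, hc⟩ := ha'
    exact ⟨c, hc, b, hb, hbc⟩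
  obtain ⟨c, ⟨hc, b, hb, hbc⟩, hmax⟩ :=
    (wellFounded_invImage_ssuperset (fun t => {z : H | ∃ r, z = r * t}) haccL).has_min T hT
  refine ⟨b, c, hb, ⟨hc, fun u v huv => ?_⟩, hbc⟩
  by_contra! huv'
  have hvT : v ∈ T := ⟨huv'.2, b * u, by simp [hb], by rw [hbc, huv, mul_assoc]⟩
  exact hmax v hvT (huv ▸ huc.leftIdeal_mul_ssubset huv'.1 v)

end Factorization

/-- A unit-cancellative monoid satisfying the ACCP (on principal right ideals and on
principal left ideals) is atomic: every non-unit is a finite product of atoms. -/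
theorem stmt_1 {H : Type*} [Monoid H]
    (huc : ∀ x y : H, (x * y = x ∨ y * x = x) → IsUnit y)
    (haccR : ∀ a : ℕ → H,
      (∀ n, {z : H | ∃ r, z = a n * r} ⊆ {z : H | ∃ r, z = a (n + 1) * r}) →
      ∃ N, ∀ n, N ≤ n → {z : H | ∃ r, z = a n * r} = {z : H | ∃ r, z = a N * r})
    (haccL : ∀ a : ℕ → H,
      (∀ n, {z : H | ∃ r, z = r * a n} ⊆ {z : H | ∃ r, z = r * a (n + 1)}) →
      ∃ N, ∀ n, N ≤ n → {z : H | ∃ r, z = r * a n} = {z : H | ∃ r, z = r * a N}) :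
    ∀ x : H, ¬ IsUnit x →
      ∃ l : List H, l ≠ [] ∧ (∀ a ∈ l, IsAtomIn a) ∧ l.prod = x := by
  intro x hx
  by_contra hx'
  let Ω : Set H := {a | ¬IsUnit a ∧ ¬IsAtomProduct a}
  obtain ⟨a, ⟨ha, ha'⟩, hmax⟩ :=
    (wellFounded_invImage_ssuperset (fun t => {z : H | ∃ r, z = t * r}) haccR).has_min Ω
      ⟨x, hx, hx'⟩
  obtain ⟨b, c, hb, hc, rfl⟩ :=
    exists_eq_mul_atom_of_not_isAtomIn huc haccL ha fun hat => ha' hat.isAtomProduct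
  have hbΩ : b ∈ Ω := ⟨hb, fun hprod => ha' (hprod.mul_atom hc)⟩
  exact hmax b hbΩ (IsUnitCancellative.rightIdeal_mul_ssubset huc b hc.1)
end

section
/- Let H be a monoid admitting a length function λ : H → ℕ, and let M be a submonoid of H whose units are exactly M ∩ H^×. Then M is a BF-monoid, and moreover whenever x ∈ M is a product of k atoms of M one has k ≤ λ(x) (so sup L_M(x) ≤ λ(x) for all x ∈ M). -/
/-- If a monoid `H` admits a length function `lam` and `M` is a submonoid of `H` whose
units are exactly `M ∩ H^×`, then `M` is a BF-monoid and every factorization of `x ∈ M`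
into `k` atoms of `M` satisfies `k ≤ lam x`. -/
theorem stmt_2 {H : Type*} [Monoid H] (lam : H → ℕ)
    (hlam : ∀ x u v : H, (¬ IsUnit u ∨ ¬ IsUnit v) → lam x < lam (u * x * v))
    (M : Submonoid H) (hM : ∀ m : M, IsUnit m ↔ IsUnit (m : H)) :
    (∀ m : M, ¬ IsUnit m →
      (∃ l : List M, (∀ a ∈ l, IsAtomIn a) ∧ l.prod = m) ∧
      {k : ℕ | ∃ l : List M, l.length = k ∧ (∀ a ∈ l, IsAtomIn a) ∧ l.prod = m}.Finite) ∧
    (∀ (m : M) (l : List M), (∀ a ∈ l, IsAtomIn a) → l.prod = m → l.length ≤ lam m) := by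
  -- length bound for lists of non-units
  have hinc : ∀ l : List M, (∀ a ∈ l, ¬ IsUnit a) → l.length ≤ lam ((l.prod : M) : H) := by
    intro l
    induction l with
    | nil => intro _; exact Nat.zero_le _
    | cons a l ih =>
      intro h
      have ha : ¬ IsUnit (a : H) := fun hu => h a List.mem_cons_self ((hM a).mpr hu)
      have h1 : lam ((l.prod : M) : H) < lam ((a : H) * ((l.prod : M) : H) * 1) :=
        hlam _ _ _ (Or.inl ha)
      have h2 := ih (fun b hb => h b (List.mem_cons_of_mem a hb))
      simp only [List.prod_cons, Submonoid.coe_mul, List.length_cons]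
      rw [mul_one] at h1
      omega
  have hbound : ∀ (m : M) (l : List M), (∀ a ∈ l, IsAtomIn a) → l.prod = m →
      l.length ≤ lam m := by
    intro m l hl hp
    have := hinc l (fun a ha => (hl a ha).1)
    rw [hp] at this
    exact this
  -- existence by strong induction on lam
  have hex : ∀ n (m : M), lam (m : H) = n → ¬ IsUnit m →
      ∃ l : List M, (∀ a ∈ l, IsAtomIn a) ∧ l.prod = m := by
    intro n
    induction n using Nat.strong_induction_on with
    | _ n ih =>
      intro m hn hm
      by_cases hat : IsAtomIn m
      · exact ⟨[m], by simpa using hat, by simp⟩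
      · have hB : ¬ ∀ x y : M, m = x * y → IsUnit x ∨ IsUnit y := fun hB => hat ⟨hm, hB⟩
        push_neg at hB
        obtain ⟨x, y, hxy, hx, hy⟩ := hB
        have hxH : ¬ IsUnit (x : H) := fun h => hx ((hM x).mpr h)
        have hyH : ¬ IsUnit (y : H) := fun h => hy ((hM y).mpr h)
        have hmH : (m : H) = (x : H) * (y : H) := by rw [hxy]; rfl
        have hlx : lam (x : H) < n := by
          have h1 := hlam (x : H) 1 (y : H) (Or.inr hyH)
          rw [one_mul] at h1
          rw [← hn, hmH]; exact h1
        have hly : lam (y : H) < n := by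
          have h1 := hlam (y : H) (x : H) 1 (Or.inl hxH)
          rw [mul_one] at h1
          rw [← hn, hmH]; exact h1
        obtain ⟨lx, hlx1, hlx2⟩ := ih _ hlx x rfl hx
        obtain ⟨ly, hly1, hly2⟩ := ih _ hly y rfl hy
        refine ⟨lx ++ ly, ?_, ?_⟩
        · intro a ha
          rcases List.mem_append.mp ha with h | h
          · exact hlx1 a h
          · exact hly1 a h
        · rw [List.prod_append, hlx2, hly2, hxy]
  refine ⟨fun m hm => ⟨hex _ m rfl hm, ?_⟩, hbound⟩
  apply (Set.finite_Iic (lam (m : H))).subset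
  rintro k ⟨l, hlen, hl, hp⟩
  exact hlen ▸ hbound m l hl hp
end

section
/- For a monoid H, the following are equivalent: (a) H is a BF-monoid; (b) for every x ∈ H there exists n ≥ 1 such that x cannot be written as a product of n non-units of H (equivalently, the intersection over all n ≥ 1 of the sets (H∖H^×)ⁿ of n-fold products of non-units is empty); (c) H admits a length function. Moreover, if any of these conditions holds, then H is unit-cancellative. -/
/-- `H` is a BF-monoid: every non-unit has a nonempty finite set of (factorization)
lengths. -/
def IsBFMonoid (H : Type*) [Monoid H] : Prop :=
  ∀ x : H, ¬ IsUnit x →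
    (∃ l : List H, (∀ a ∈ l, IsAtomIn a) ∧ l.prod = x) ∧
    {k : ℕ | ∃ l : List H, l.length = k ∧ (∀ a ∈ l, IsAtomIn a) ∧ l.prod = x}.Finite

namespace BF3aux

variable {H : Type*} [Monoid H]

/-- `x` is a product of `n` non-units. -/
def Pnu (x : H) (n : ℕ) : Prop :=
  ∃ l : List H, l.length = n ∧ (∀ a ∈ l, ¬ IsUnit a) ∧ l.prod = x

/-- Condition (b). -/
def CondB (H : Type*) [Monoid H] : Prop := ∀ x : H, ∃ n : ℕ, 1 ≤ n ∧ ¬ Pnu x n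

lemma unit_of_right_inv (hB : CondB H) {u s : H} (h : u * s = 1) : IsUnit u := by
  by_contra hu
  have hsu : s * u ≠ 1 := fun hsu => hu ⟨⟨u, s, h, hsu⟩, rfl⟩
  set e := s * u with he
  have he2 : e * e = e := by
    rw [he, mul_assoc s u (s * u), ← mul_assoc u s u, h, one_mul]
  have heu : ¬ IsUnit e := by
    intro h'
    obtain ⟨t, ht⟩ := h'.exists_right_inv
    have : e = 1 := by
      calc e = e * (e * t) := by rw [ht, mul_one]
      _ = (e * e) * t := (mul_assoc _ _ _).symm
      _ = e * t := by rw [he2]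
      _ = 1 := ht
    exact hsu this
  have upow : ∀ k : ℕ, u * e ^ k = u := by
    intro k
    induction k with
    | zero => rw [pow_zero, mul_one]
    | succ k ih =>
        rw [pow_succ, ← mul_assoc, ih, he, ← mul_assoc, h, one_mul]
  obtain ⟨n, h1, hn⟩ := hB u
  apply hn
  refine ⟨u :: List.replicate (n - 1) e, ?_, ?_, ?_⟩
  · simp; omega
  · intro a ha
    rcases List.mem_cons.mp ha with rfl | ha
    · exact hu
    · rw [List.eq_of_mem_replicate ha]; exact heu
  · rw [List.prod_cons, List.prod_replicate, upow]

lemma unit_of_left_inv (hB : CondB H) {u s : H} (h : s * u = 1) : IsUnit u := by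
  by_contra hu
  have hus : u * s ≠ 1 := fun hus => hu ⟨⟨u, s, hus, h⟩, rfl⟩
  set e := u * s with he
  have he2 : e * e = e := by
    rw [he, mul_assoc u s (u * s), ← mul_assoc s u s, h, one_mul]
  have heu : ¬ IsUnit e := by
    intro h'
    obtain ⟨t, ht⟩ := h'.exists_right_inv
    have : e = 1 := by
      calc e = e * (e * t) := by rw [ht, mul_one]
      _ = (e * e) * t := (mul_assoc _ _ _).symm
      _ = e * t := by rw [he2]
      _ = 1 := ht
    exact hus this
  have upow : ∀ k : ℕ, e ^ k * u = u := by
    intro k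
    induction k with
    | zero => rw [pow_zero, one_mul]
    | succ k ih =>
        rw [pow_succ', mul_assoc, ih, he, mul_assoc, h, mul_one]
  obtain ⟨n, h1, hn⟩ := hB u
  apply hn
  refine ⟨List.replicate (n - 1) e ++ [u], ?_, ?_, ?_⟩
  · simp; omega
  · intro a ha
    rcases List.mem_append.mp ha with ha | ha
    · rw [List.eq_of_mem_replicate ha]; exact heu
    · rw [List.mem_singleton.mp ha]; exact hu
  · rw [List.prod_append, List.prod_replicate, List.prod_singleton, upow]

lemma unit_left_of_unit_mul (hB : CondB H) {a b : H} (h : IsUnit (a * b)) : IsUnit a := by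
  obtain ⟨w, hw⟩ := h
  have : a * (b * ↑w⁻¹) = 1 := by
    rw [← mul_assoc, ← hw]; exact w.mul_inv
  exact unit_of_right_inv hB this

lemma unit_right_of_unit_mul (hB : CondB H) {a b : H} (h : IsUnit (a * b)) : IsUnit b := by
  obtain ⟨w, hw⟩ := h
  have : (↑w⁻¹ * a) * b = 1 := by
    rw [mul_assoc, ← hw]; exact w.inv_mul
  exact unit_of_left_inv hB this

lemma prod_nonunit (hB : CondB H) {l : List H} (hne : l ≠ [])
    (hnu : ∀ a ∈ l, ¬ IsUnit a) : ¬ IsUnit l.prod := by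
  cases l with
  | nil => exact absurd rfl hne
  | cons a t =>
      rw [List.prod_cons]
      intro h
      exact hnu a List.mem_cons_self (unit_left_of_unit_mul hB h)

lemma Pnu_pred (hB : CondB H) {x : H} {n : ℕ} (h : Pnu x (n + 2)) : Pnu x (n + 1) := by
  obtain ⟨l, hlen, hnu, hp⟩ := h
  match l, hlen with
  | a :: b :: t, hlen =>
    refine ⟨(a * b) :: t, by simpa using hlen, ?_, ?_⟩
    · intro c hc
      rcases List.mem_cons.mp hc with rfl | hc
      · exact fun h' => hnu a (by simp) (unit_left_of_unit_mul hB h')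
      · exact hnu c (by simp [hc])
    · rw [List.prod_cons, mul_assoc, ← List.prod_cons, ← List.prod_cons]
      exact hp

lemma Pnu_down (hB : CondB H) {x : H} {n m : ℕ} (h : Pnu x n) (h1 : 1 ≤ m)
    (hmn : m ≤ n) : Pnu x m := by
  induction n with
  | zero => omega
  | succ n ih =>
      rcases eq_or_lt_of_le hmn with rfl | hlt
      · exact h
      · have hn1 : 1 ≤ n := by omega
        obtain ⟨n', rfl⟩ : ∃ n', n = n' + 1 := ⟨n - 1, by omega⟩
        exact ih (Pnu_pred hB h) (by omega)

lemma bddAbove_rep (hB : CondB H) (x : H) : BddAbove {n | Pnu x n} := by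
  obtain ⟨n₀, h1, hn₀⟩ := hB x
  refine ⟨n₀, fun n hn => ?_⟩
  by_contra hlt
  exact hn₀ (Pnu_down hB hn h1 (by omega))

noncomputable def lamB (x : H) : ℕ := sSup {n | Pnu x n}

lemma lamB_mem (hB : CondB H) {x : H} (hx : ¬ IsUnit x) :
    Pnu x (lamB x) ∧ 1 ≤ lamB x := by
  have h1 : Pnu x 1 := ⟨[x], by simp, by simpa using hx, by simp⟩
  have hne : {n | Pnu x n}.Nonempty := ⟨1, h1⟩
  constructor
  · exact Nat.sSup_mem hne (bddAbove_rep hB x)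
  · exact le_csSup (bddAbove_rep hB x) h1

lemma lamB_unit (hB : CondB H) {x : H} (hx : IsUnit x) : lamB x = 0 := by
  rcases Set.eq_empty_or_nonempty {n | Pnu x n} with he | hne
  · rw [lamB, he]; simpa using (csSup_empty : (sSup ∅ : ℕ) = ⊥)
  · have := Nat.sSup_mem hne (bddAbove_rep hB x)
    rcases Nat.eq_zero_or_pos (sSup {n | Pnu x n}) with h0 | hpos
    · exact h0
    · obtain ⟨l, hlen, hnu, hp⟩ := this
      have hne' : l ≠ [] := by
        intro h'; rw [h'] at hlen; simp at hlen; omega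
      exact absurd (hp ▸ hx) (prod_nonunit hB hne' hnu)

lemma Pnu_cons {u x : H} {n : ℕ} (hu : ¬ IsUnit u) (h : Pnu x n) : Pnu (u * x) (n + 1) := by
  obtain ⟨l, hlen, hnu, hp⟩ := h
  refine ⟨u :: l, by simp [hlen], ?_, by rw [List.prod_cons, hp]⟩
  intro a ha
  rcases List.mem_cons.mp ha with rfl | ha
  · exact hu
  · exact hnu a ha

lemma Pnu_snoc {x v : H} {n : ℕ} (hv : ¬ IsUnit v) (h : Pnu x n) : Pnu (x * v) (n + 1) := by
  obtain ⟨l, hlen, hnu, hp⟩ := h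
  refine ⟨l ++ [v], by simp [hlen], ?_, by rw [List.prod_append, List.prod_singleton, hp]⟩
  intro a ha
  rcases List.mem_append.mp ha with ha | ha
  · exact hnu a ha
  · rw [List.mem_singleton.mp ha]; exact hv

lemma Pnu_unit_left {u x : H} {n : ℕ} (hu : IsUnit u) (h : Pnu x (n + 1)) :
    Pnu (u * x) (n + 1) := by
  obtain ⟨l, hlen, hnu, hp⟩ := h
  match l, hlen with
  | a :: t, hlen =>
    obtain ⟨w, rfl⟩ := hu
    refine ⟨(↑w * a) :: t, by simpa using hlen, ?_, ?_⟩
    · intro c hc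
      rcases List.mem_cons.mp hc with rfl | hc
      · intro h'
        have : IsUnit ((↑w⁻¹ : H) * (↑w * a)) := (IsUnit.mul (Units.isUnit w⁻¹) h')
        rw [← mul_assoc, w.inv_mul, one_mul] at this
        exact hnu a (by simp) this
      · exact hnu c (by simp [hc])
    · rw [List.prod_cons, mul_assoc, ← List.prod_cons, hp]

lemma snoc_unit_aux {v : H} (hv : IsUnit v) :
    ∀ l : List H, l ≠ [] → (∀ a ∈ l, ¬ IsUnit a) →
      ∃ l' : List H, l'.length = l.length ∧ (∀ a ∈ l', ¬ IsUnit a) ∧ l'.prod = l.prod * v := by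
  intro l
  induction l with
  | nil => intro h; exact absurd rfl h
  | cons a t ih =>
      intro _ hnu
      rcases eq_or_ne t [] with rfl | ht
      · obtain ⟨w, rfl⟩ := hv
        refine ⟨[a * ↑w], by simp, ?_, by simp⟩
        intro c hc
        rw [List.mem_singleton.mp hc]
        intro h'
        have : IsUnit ((a * ↑w) * ↑w⁻¹) := h'.mul (Units.isUnit w⁻¹)
        rw [mul_assoc, w.mul_inv, mul_one] at this
        exact hnu a (by simp) this
      · obtain ⟨t', hlen, hnu', hp⟩ := ih ht (fun c hc => hnu c (by simp [hc]))
        refine ⟨a :: t', by simp [hlen], ?_, ?_⟩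
        · intro c hc
          rcases List.mem_cons.mp hc with rfl | hc
          · exact hnu c (by simp)
          · exact hnu' c hc
        · rw [List.prod_cons, hp, List.prod_cons, mul_assoc]

lemma Pnu_unit_right {x v : H} {n : ℕ} (hv : IsUnit v) (h : Pnu x (n + 1)) :
    Pnu (x * v) (n + 1) := by
  obtain ⟨l, hlen, hnu, hp⟩ := h
  have hne : l ≠ [] := by intro h'; rw [h'] at hlen; simp at hlen
  obtain ⟨l', hlen', hnu', hp'⟩ := snoc_unit_aux hv l hne hnu
  exact ⟨l', by rw [hlen', hlen], hnu', by rw [hp', hp]⟩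

lemma le_lamB (hB : CondB H) {x : H} {n : ℕ} (h : Pnu x n) : n ≤ lamB x :=
  le_csSup (bddAbove_rep hB x) h

lemma lamB_lt (hB : CondB H) (x u v : H) (h : ¬ IsUnit u ∨ ¬ IsUnit v) :
    lamB x < lamB (u * x * v) := by
  by_cases hx : IsUnit x
  · rw [lamB_unit hB hx]
    have hz : ¬ IsUnit (u * x * v) := by
      intro h'
      have huv : IsUnit (u * x) := unit_left_of_unit_mul hB h'
      have hv : IsUnit v := unit_right_of_unit_mul hB h'
      have hu : IsUnit u := unit_left_of_unit_mul hB huv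
      rcases h with h | h
      · exact h hu
      · exact h hv
    have h1 : Pnu (u * x * v) 1 := ⟨[u * x * v], by simp, by simpa using hz, by simp⟩
    have := le_lamB hB h1
    omega
  · obtain ⟨hmem, h1⟩ := lamB_mem hB hx
    rw [mul_assoc]
    by_cases hv : IsUnit v
    · have hu : ¬ IsUnit u := by tauto
      have h2 : Pnu (x * v) (lamB x) := by
        obtain ⟨k, hk⟩ : ∃ k, lamB x = k + 1 := ⟨lamB x - 1, by omega⟩
        rw [hk] at hmem ⊢
        exact Pnu_unit_right hv hmem
      have h3 : Pnu (u * (x * v)) (lamB x + 1) := Pnu_cons hu h2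
      have := le_lamB hB h3
      omega
    · have h2 : Pnu (x * v) (lamB x + 1) := Pnu_snoc hv hmem
      by_cases hu : IsUnit u
      · have h3 : Pnu (u * (x * v)) (lamB x + 1) := Pnu_unit_left hu h2
        have := le_lamB hB h3
        omega
      · have h3 : Pnu (u * (x * v)) (lamB x + 2) := Pnu_cons hu h2
        have := le_lamB hB h3
        omega

/-- Condition (c): existence of a length function. -/
def CondC (H : Type*) [Monoid H] : Prop :=
  ∃ lam : H → ℕ, ∀ x u v : H, (¬ IsUnit u ∨ ¬ IsUnit v) → lam x < lam (u * x * v)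

lemma bToC (hB : CondB H) : CondC H := ⟨lamB, lamB_lt hB⟩

lemma lam_chain {lam : H → ℕ}
    (hlam : ∀ x u v : H, (¬ IsUnit u ∨ ¬ IsUnit v) → lam x < lam (u * x * v)) :
    ∀ (l : List H) (y : H), (∀ a ∈ l, ¬ IsUnit a) → lam y + l.length ≤ lam (y * l.prod) := by
  intro l
  induction l with
  | nil => intro y _; simp
  | cons a t ih =>
      intro y hnu
      have h1 : lam y < lam (y * a) := by
        have := hlam y 1 a (Or.inr (hnu a (by simp)))
        rwa [one_mul] at this
      have h2 := ih (y * a) (fun c hc => hnu c (by simp [hc]))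
      rw [List.prod_cons, ← mul_assoc]
      simp only [List.length_cons]
      omega

lemma cToB (hC : CondC H) : CondB H := by
  obtain ⟨lam, hlam⟩ := hC
  intro x
  refine ⟨lam x + 1, by omega, ?_⟩
  rintro ⟨l, hlen, hnu, hp⟩
  have := lam_chain hlam l 1 hnu
  rw [one_mul, hp] at this
  omega

lemma cToA (hC : CondC H) : IsBFMonoid H := by
  obtain ⟨lam, hlam⟩ := hC
  have split : ∀ x : H, ¬ IsUnit x → ¬ IsAtomIn x →
      ∃ y z : H, x = y * z ∧ ¬ IsUnit y ∧ ¬ IsUnit z := by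
    intro x hx hA
    rw [IsAtomIn] at hA
    push_neg at hA
    exact hA hx
  have lamlt : ∀ y z : H, ¬ IsUnit y → ¬ IsUnit z →
      lam y < lam (y * z) ∧ lam z < lam (y * z) := by
    intro y z hy hz
    constructor
    · have := hlam y 1 z (Or.inr hz); rwa [one_mul] at this
    · have := hlam z y 1 (Or.inl hy); rwa [mul_one] at this
  have ex : ∀ (n : ℕ) (x : H), lam x ≤ n → ¬ IsUnit x →
      ∃ l : List H, (∀ a ∈ l, IsAtomIn a) ∧ l.prod = x := by
    intro n
    induction n with
    | zero =>
        intro x hle hx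
        by_cases hA : IsAtomIn x
        · exact ⟨[x], by simpa using hA, by simp⟩
        · obtain ⟨y, z, rfl, hy, hz⟩ := split x hx hA
          have := (lamlt y z hy hz).1
          omega
    | succ n ih =>
        intro x hle hx
        by_cases hA : IsAtomIn x
        · exact ⟨[x], by simpa using hA, by simp⟩
        · obtain ⟨y, z, rfl, hy, hz⟩ := split x hx hA
          obtain ⟨h1, h2⟩ := lamlt y z hy hz
          obtain ⟨ly, haty, hpy⟩ := ih y (by omega) hy
          obtain ⟨lz, hatz, hpz⟩ := ih z (by omega) hz
          refine ⟨ly ++ lz, ?_, by rw [List.prod_append, hpy, hpz]⟩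
          intro a ha
          rcases List.mem_append.mp ha with ha | ha
          · exact haty a ha
          · exact hatz a ha
  intro x hx
  refine ⟨ex (lam x) x le_rfl hx, ?_⟩
  apply Set.Finite.subset (Set.finite_Iic (lam x))
  rintro k ⟨l, hlen, hat, hp⟩
  have hnu : ∀ a ∈ l, ¬ IsUnit a := fun a ha => (hat a ha).1
  have := lam_chain hlam l 1 hnu
  rw [one_mul, hp] at this
  simp only [Set.mem_Iic]
  omega

lemma expand_nonunits (hA : IsBFMonoid H) :
    ∀ l : List H, (∀ a ∈ l, ¬ IsUnit a) →
      ∃ L : List H, (∀ b ∈ L, IsAtomIn b) ∧ L.prod = l.prod ∧ l.length ≤ L.length := by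
  intro l
  induction l with
  | nil => intro _; exact ⟨[], by simp, by simp, by simp⟩
  | cons a t ih =>
      intro hnu
      obtain ⟨La, hata, hpa⟩ := (hA a (hnu a (by simp))).1
      obtain ⟨Lt, hatt, hpt, hlent⟩ := ih (fun c hc => hnu c (by simp [hc]))
      have hLa : La ≠ [] := by
        intro h'
        rw [h'] at hpa
        exact hnu a (by simp) (hpa ▸ isUnit_one)
      refine ⟨La ++ Lt, ?_, ?_, ?_⟩
      · intro b hb
        rcases List.mem_append.mp hb with hb | hb
        · exact hata b hb
        · exact hatt b hb
      · rw [List.prod_append, hpa, hpt, List.prod_cons]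
      · have : 1 ≤ La.length := List.length_pos_iff.mpr hLa
        simp only [List.length_cons, List.length_append]
        omega

lemma aToB (hA : IsBFMonoid H) : CondB H := by
  intro x
  by_cases hx : IsUnit x
  · refine ⟨1, le_rfl, ?_⟩
    rintro ⟨l, hlen, hnu, hp⟩
    obtain ⟨a, rfl⟩ := List.length_eq_one_iff.mp hlen
    rw [List.prod_singleton] at hp
    exact hnu a (by simp) (hp ▸ hx)
  · obtain ⟨⟨l₀, hat₀, hp₀⟩, hfin⟩ := hA x hx
    set S := {k : ℕ | ∃ l : List H, l.length = k ∧ (∀ a ∈ l, IsAtomIn a) ∧ l.prod = x}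
    have hbdd : BddAbove S := hfin.bddAbove
    refine ⟨sSup S + 1, by omega, ?_⟩
    rintro ⟨l, hlen, hnu, hp⟩
    obtain ⟨L, hatL, hpL, hlenL⟩ := expand_nonunits hA l hnu
    have hmem : L.length ∈ S := ⟨L, rfl, hatL, by rw [hpL, hp]⟩
    have := le_csSup hbdd hmem
    omega

end BF3aux

open BF3aux in
/-- For a monoid `H`, the following are equivalent: (a) `H` is a BF-monoid; (b) for every
`x ∈ H` there is `n ≥ 1` such that `x` is not a product of `n` non-units; (c) `H` admits
a length function. Moreover, each of these conditions implies that `H` is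
unit-cancellative. -/
theorem stmt_3 {H : Type*} [Monoid H] :
    (IsBFMonoid H ↔
      ∀ x : H, ∃ n : ℕ, 1 ≤ n ∧
        ¬ ∃ l : List H, l.length = n ∧ (∀ a ∈ l, ¬ IsUnit a) ∧ l.prod = x) ∧
    (IsBFMonoid H ↔
      ∃ lam : H → ℕ, ∀ x u v : H, (¬ IsUnit u ∨ ¬ IsUnit v) → lam x < lam (u * x * v)) ∧
    (IsBFMonoid H → ∀ x y : H, (x * y = x ∨ y * x = x) → IsUnit y) := by
  refine ⟨⟨fun hA => aToB hA, fun hB => cToA (bToC hB)⟩,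
    ⟨fun hA => bToC (aToB hA), fun hC => cToA hC⟩, ?_⟩
  intro hA x y h
  obtain ⟨lam, hlam⟩ := bToC (aToB hA)
  by_contra hy
  rcases h with h | h
  · have := hlam x 1 y (Or.inr hy)
    rw [one_mul, h] at this
    omega
  · have := hlam x y 1 (Or.inl hy)
    rw [mul_one, h] at this
    omega
end

section
/- Let H be a Dedekind-finite monoid. Then P_fun(H) is a divisor-closed submonoid of P_fin(H): if X, Y, U, V are nonempty finite subsets of H with X = UYV and X contains a unit of H, then Y contains a unit of H. -/
open Pointwise

theorem Set.exists_isUnit_of_isUnit_mem_mul {M : Type*} [Monoid M] [IsDedekindFiniteMonoid M]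
    {s t : Set M} {x : M} (hx : x ∈ s * t) (hunit : IsUnit x) :
    (∃ a ∈ s, IsUnit a) ∧ ∃ b ∈ t, IsUnit b := by
  obtain ⟨a, ha, b, hb, rfl⟩ := hx
  obtain ⟨hua, hub⟩ := IsUnit.mul_iff.mp hunit
  exact ⟨⟨a, ha, hua⟩, b, hb, hub⟩

/-- If `H` is a Dedekind-finite monoid, then the restricted power monoid `P_fun(H)` is a
divisor-closed submonoid of the power monoid `P_fin(H)`: if `X = U * Y * V` for nonempty
finite subsets `U, Y, V` of `H` and `X` contains a unit of `H`, then `Y` contains a unit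
of `H`. -/
theorem stmt_6 {H : Type*} [Monoid H] [DecidableEq H]
    (hdf : ∀ x y : H, x * y = 1 → y * x = 1) :
    ∀ X Y U V : Finset H, X.Nonempty → Y.Nonempty → U.Nonempty → V.Nonempty →
      X = U * Y * V → (∃ x ∈ X, IsUnit x) → ∃ y ∈ Y, IsUnit y := by
  have : IsDedekindFiniteMonoid H := ⟨hdf _ _⟩
  rintro X Y U V - - - - rfl ⟨x, hx, hunit⟩
  rw [← Finset.mem_coe, Finset.coe_mul, Finset.coe_mul] at hx
  obtain ⟨⟨uy, huy, hunit_uy⟩, -⟩ := Set.exists_isUnit_of_isUnit_mem_mul hx hunit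
  exact (Set.exists_isUnit_of_isUnit_mem_mul huy hunit_uy).2
end

section
/- Let H be a monoid and a ∈ H. If the singleton {a} is an atom of the power monoid P_fin(H), then a is an atom of H. Conversely, if H is strongly unit-cancellative and a is an atom of H, then {a} is an atom of P_fin(H). -/
/-
In `P_fin(H)` a singleton `{a}` multiplies like `a`, and `{a}` is a unit exactly when `a` is, so
a factorisation `a = x * y` in `H` gives `{a} = {x} * {y}`; this is the first implication.
Conversely, if `X * Y = {a}` then `x * y = a` for all `x ∈ X`, `y ∈ Y`. Since `a` is an atom,
some `x₀ * y₀ = a` has a unit factor, say `x₀`. For any other `x ∈ X`, `x * y₀ = x₀ * y₀` gives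
`(x₀⁻¹ * x) * y₀ = y₀`, hence `x = x₀` by strong unit-cancellativity; so `X = {x₀}` is a unit.
-/

open Pointwise

/-- `A` is an atom of the power monoid `P_fin(H)`: it is a nonempty finite subset of
`H`, not a unit of `P_fin(H)`, and cannot be written as a product of two nonempty
finite subsets both of which are non-units. -/
def IsAtomPfin {H : Type*} [Monoid H] [DecidableEq H] (A : Finset H) : Prop :=
  A.Nonempty ∧ ¬ IsUnit A ∧
    ∀ X Y : Finset H, X.Nonempty → Y.Nonempty → A = X * Y → IsUnit X ∨ IsUnit Y

def StronglyUnitCancellative (H : Type*) [Monoid H] : Prop :=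
  ∀ x y : H, (x * y = x ∨ y * x = x) → y = 1

namespace StronglyUnitCancellative

variable {H : Type*} [Monoid H]

theorem eq_of_mul_eq_mul_right (hH : StronglyUnitCancellative H) {u x y : H} (hu : IsUnit u)
    (h : x * y = u * y) : x = u := by
  obtain ⟨u, rfl⟩ := hu
  have hcancel : (↑u⁻¹ * x) * y = y := by rw [mul_assoc, h, u.inv_mul_cancel_left]
  rw [← u.mul_inv_cancel_left x, hH y _ (Or.inr hcancel), mul_one]

theorem eq_of_mul_eq_mul_left (hH : StronglyUnitCancellative H) {u x y : H} (hu : IsUnit u)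
    (h : x * y = x * u) : y = u := by
  obtain ⟨u, rfl⟩ := hu
  have hcancel : x * (y * ↑u⁻¹) = x := by rw [← mul_assoc, h, u.mul_inv_cancel_right]
  rw [← u.inv_mul_cancel_right y, hH x _ (Or.inl hcancel), one_mul]

end StronglyUnitCancellative

namespace Finset

variable {H : Type*} [Monoid H] [DecidableEq H]

theorem mul_eq_of_mul_eq_singleton {X Y : Finset H} {a x y : H} (hXY : X * Y = {a})
    (hx : x ∈ X) (hy : y ∈ Y) : x * y = a :=
  mem_singleton.mp (hXY ▸ mul_mem_mul hx hy)

theorem isUnit_singleton_iff {a : H} : IsUnit ({a} : Finset H) ↔ IsUnit a := by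
  refine ⟨fun ha => ?_, fun ha => ha.map singletonMonoidHom⟩
  obtain ⟨B, hright, hleft⟩ := isUnit_iff_exists.mp ha
  rw [← singleton_one] at hright hleft
  obtain ⟨b, hb⟩ := (mul_nonempty.mp (hright ▸ singleton_nonempty 1)).2
  exact isUnit_iff_exists.mpr ⟨b, mul_eq_of_mul_eq_singleton hright (mem_singleton_self a) hb,
    mul_eq_of_mul_eq_singleton hleft hb (mem_singleton_self a)⟩

end Finset

section Atoms

variable {H : Type*} [Monoid H] [DecidableEq H]

theorem IsAtomPfin.isAtomIn {a : H} (ha : IsAtomPfin ({a} : Finset H)) : IsAtomIn a := by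
  obtain ⟨-, hnu, hsplit⟩ := ha
  refine ⟨fun hu => hnu (Finset.isUnit_singleton_iff.mpr hu), fun x y hxy => ?_⟩
  simpa only [Finset.isUnit_singleton_iff] using hsplit {x} {y} (Finset.singleton_nonempty x)
    (Finset.singleton_nonempty y) (by rw [Finset.singleton_mul_singleton, hxy])

theorem IsAtomIn.isAtomPfin_singleton (hH : StronglyUnitCancellative H) {a : H}
    (ha : IsAtomIn a) : IsAtomPfin ({a} : Finset H) := by
  obtain ⟨hna, hsplit⟩ := ha
  refine ⟨Finset.singleton_nonempty a, fun hu => hna (Finset.isUnit_singleton_iff.mp hu), ?_⟩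
  rintro X Y ⟨x₀, hx₀⟩ ⟨y₀, hy₀⟩ hXY
  have hprod {x y : H} (hx : x ∈ X) (hy : y ∈ Y) : x * y = a :=
    Finset.mul_eq_of_mul_eq_singleton hXY.symm hx hy
  rcases hsplit x₀ y₀ (hprod hx₀ hy₀).symm with hu | hu
  · have hX : X = {x₀} := Finset.eq_singleton_iff_unique_mem.mpr ⟨hx₀, fun x hx =>
      hH.eq_of_mul_eq_mul_right hu ((hprod hx hy₀).trans (hprod hx₀ hy₀).symm)⟩
    exact Or.inl (hX ▸ Finset.isUnit_singleton_iff.mpr hu)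
  · have hY : Y = {y₀} := Finset.eq_singleton_iff_unique_mem.mpr ⟨hy₀, fun y hy =>
      hH.eq_of_mul_eq_mul_left hu ((hprod hx₀ hy).trans (hprod hx₀ hy₀).symm)⟩
    exact Or.inr (hY ▸ Finset.isUnit_singleton_iff.mpr hu)

end Atoms

/-- If `{a}` is an atom of `P_fin(H)` then `a` is an atom of `H`; conversely, if `H`
is strongly unit-cancellative and `a` is an atom of `H`, then `{a}` is an atom of
`P_fin(H)`. -/
theorem stmt_7 {H : Type*} [Monoid H] [DecidableEq H] (a : H) :
    (IsAtomPfin ({a} : Finset H) → IsAtomIn a) ∧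
    ((∀ x y : H, (x * y = x ∨ y * x = x) → y = 1) →
      IsAtomIn a → IsAtomPfin ({a} : Finset H)) :=
  ⟨IsAtomPfin.isAtomIn, fun hH ha => ha.isAtomPfin_singleton hH⟩
end

section
/- Let H be a monoid equipped with a total order ⪯ such that x ≺ y implies xz ≺ yz and zx ≺ zy for all x, y, z ∈ H. Then for all nonempty finite subsets X, Y of H, the product set XY = {xy : x ∈ X, y ∈ Y} satisfies |XY| ≥ |X| + |Y| − 1. -/
open Pointwise

/-- Strict monotonicity on both sides gives cancellativity and weak monotonicity, which is what
Mathlib's Cauchy–Davenport theorem for linearly ordered semigroups needs. -/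
theorem Finset.card_add_card_le_card_mul_add_one {α : Type*} [Mul α] [LinearOrder α]
    [DecidableEq α] [MulLeftStrictMono α] [MulRightStrictMono α] {s t : Finset α}
    (hs : s.Nonempty) (ht : t.Nonempty) : s.card + t.card ≤ (s * t).card + 1 := by
  have : IsCancelMul α :=
    { MulLeftStrictMono.toIsLeftCancelMul, MulRightStrictMono.toIsRightCancelMul with }
  have := mulLeftMono_of_mulLeftStrictMono α
  have := mulRightMono_of_mulRightStrictMono α
  -- `convert` reconciles `DecidableEq α` with the instance coming from `LinearOrder α`.
  convert Nat.le_add_of_sub_le (cauchy_davenport_mul_of_linearOrder_isCancelMul hs ht)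

/-- In a linearly ordered monoid (a monoid with a total order whose strict inequality
is compatible with multiplication on both sides), the product set of two nonempty
finite subsets `X`, `Y` satisfies `|XY| ≥ |X| + |Y| - 1`. -/
theorem stmt_8 {H : Type*} [Monoid H] [LinearOrder H] [DecidableEq H]
    (hr : ∀ x y z : H, x < y → x * z < y * z)
    (hl : ∀ x y z : H, x < y → z * x < z * y)
    (X Y : Finset H) (hX : X.Nonempty) (hY : Y.Nonempty) :
    X.card + Y.card ≤ (X * Y).card + 1 := by
  have : MulLeftStrictMono H := ⟨fun z _ _ h ↦ hl _ _ z h⟩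
  have : MulRightStrictMono H := ⟨fun z _ _ h ↦ hr _ _ z h⟩
  exact Finset.card_add_card_le_card_mul_add_one hX hY
end

section
/- Let H be a linearly orderable monoid. Then: the power monoid P_fin(H) is strongly unit-cancellative (i.e., for nonempty finite X, Y ⊆ H, XY = X or YX = X implies Y = {1}); the map X ↦ |X| − 1 is a length function on the restricted power monoid P_fun(H); and consequently P_fun(H) is a BF-monoid. -/
open Pointwise

set_option linter.unusedSectionVars false

/-- `X` belongs to the restricted power monoid `P_fun(H)`: it is a nonempty finite
subset of `H` containing at least one unit of `H`. -/
def MemPfun {H : Type*} [Monoid H] (X : Finset H) : Prop :=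
  X.Nonempty ∧ ∃ x ∈ X, IsUnit x

/-- `A` is an atom of the restricted power monoid `P_fun(H)`. -/
def IsAtomPfun {H : Type*} [Monoid H] [DecidableEq H] (A : Finset H) : Prop :=
  MemPfun A ∧ ¬ IsUnit A ∧
    ∀ X Y : Finset H, MemPfun X → MemPfun Y → A = X * Y → IsUnit X ∨ IsUnit Y

section Aux

variable {H : Type*} [Monoid H] [LinearOrder H] [DecidableEq H]

lemma aux_injR (hr : ∀ x y z : H, x < y → x * z < y * z) (y : H) :
    Function.Injective (fun x : H => x * y) := by
  intro a b hab
  rcases lt_trichotomy a b with h | h | h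
  · exact absurd hab (hr a b y h).ne
  · exact h
  · exact absurd hab (hr b a y h).ne'

lemma aux_injL (hl : ∀ x y z : H, x < y → z * x < z * y) (y : H) :
    Function.Injective (fun x : H => y * x) := by
  intro a b hab
  rcases lt_trichotomy a b with h | h | h
  · exact absurd hab (hl a b y h).ne
  · exact h
  · exact absurd hab (hl b a y h).ne'

lemma aux_mulLeR (hr : ∀ x y z : H, x < y → x * z < y * z)
    {a b : H} (h : a ≤ b) (c : H) : a * c ≤ b * c := by
  rcases h.eq_or_lt with rfl | h
  · exact le_rfl
  · exact (hr a b c h).le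

lemma aux_mulLeL (hl : ∀ x y z : H, x < y → z * x < z * y)
    {a b : H} (h : a ≤ b) (c : H) : c * a ≤ c * b := by
  rcases h.eq_or_lt with rfl | h
  · exact le_rfl
  · exact (hl a b c h).le

lemma aux_card_le_mulR (hr : ∀ x y z : H, x < y → x * z < y * z)
    {X Y : Finset H} (hY : Y.Nonempty) : X.card ≤ (X * Y).card := by
  obtain ⟨y, hy⟩ := hY
  calc X.card = (X.image (· * y)).card :=
        (Finset.card_image_of_injective _ (aux_injR hr y)).symm
    _ ≤ (X * Y).card := by
        apply Finset.card_le_card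
        intro z hz
        obtain ⟨x, hx, rfl⟩ := Finset.mem_image.mp hz
        exact Finset.mul_mem_mul hx hy

lemma aux_card_le_mulL (hl : ∀ x y z : H, x < y → z * x < z * y)
    {X Y : Finset H} (hX : X.Nonempty) : Y.card ≤ (X * Y).card := by
  obtain ⟨x, hx⟩ := hX
  calc Y.card = (Y.image (x * ·)).card :=
        (Finset.card_image_of_injective _ (aux_injL hl x)).symm
    _ ≤ (X * Y).card := by
        apply Finset.card_le_card
        intro z hz
        obtain ⟨y, hy, rfl⟩ := Finset.mem_image.mp hz
        exact Finset.mul_mem_mul hx hy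

lemma aux_add_one_le_mulR (hr : ∀ x y z : H, x < y → x * z < y * z)
    (hl : ∀ x y z : H, x < y → z * x < z * y)
    {X V : Finset H} (hX : X.Nonempty) (hV : 2 ≤ V.card) :
    X.card + 1 ≤ (X * V).card := by
  obtain ⟨a, ha, b, hb, hab⟩ := Finset.one_lt_card.mp hV
  have key : ∀ v₁ v₂ : H, v₁ ∈ V → v₂ ∈ V → v₁ < v₂ → X.card + 1 ≤ (X * V).card := by
    intro v₁ v₂ h1 h2 hlt
    have hM : X.max' hX ∈ X := X.max'_mem hX
    have hnot : X.max' hX * v₂ ∉ X.image (· * v₁) := by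
      intro hmem
      obtain ⟨x, hx, hx2⟩ := Finset.mem_image.mp hmem
      have : x * v₁ < X.max' hX * v₂ :=
        lt_of_le_of_lt (aux_mulLeR hr (X.le_max' x hx) v₁) (hl v₁ v₂ (X.max' hX) hlt)
      exact this.ne hx2
    have hsub : insert (X.max' hX * v₂) (X.image (· * v₁)) ⊆ X * V := by
      intro z hz
      rcases Finset.mem_insert.mp hz with rfl | hz
      · exact Finset.mul_mem_mul hM h2
      · obtain ⟨x, hx, rfl⟩ := Finset.mem_image.mp hz
        exact Finset.mul_mem_mul hx h1
    calc X.card + 1 = (X.image (· * v₁)).card + 1 := by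
          rw [Finset.card_image_of_injective _ (aux_injR hr v₁)]
      _ = (insert (X.max' hX * v₂) (X.image (· * v₁))).card :=
          (Finset.card_insert_of_notMem hnot).symm
      _ ≤ (X * V).card := Finset.card_le_card hsub
  rcases hab.lt_or_gt with h | h
  · exact key a b ha hb h
  · exact key b a hb ha h

lemma aux_add_one_le_mulL (hr : ∀ x y z : H, x < y → x * z < y * z)
    (hl : ∀ x y z : H, x < y → z * x < z * y)
    {U X : Finset H} (hX : X.Nonempty) (hU : 2 ≤ U.card) :
    X.card + 1 ≤ (U * X).card := by
  obtain ⟨a, ha, b, hb, hab⟩ := Finset.one_lt_card.mp hU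
  have key : ∀ u₁ u₂ : H, u₁ ∈ U → u₂ ∈ U → u₁ < u₂ → X.card + 1 ≤ (U * X).card := by
    intro u₁ u₂ h1 h2 hlt
    have hM : X.max' hX ∈ X := X.max'_mem hX
    have hnot : u₂ * X.max' hX ∉ X.image (u₁ * ·) := by
      intro hmem
      obtain ⟨x, hx, hx2⟩ := Finset.mem_image.mp hmem
      have : u₁ * x < u₂ * X.max' hX :=
        lt_of_le_of_lt (aux_mulLeL hl (X.le_max' x hx) u₁) (hr u₁ u₂ (X.max' hX) hlt)
      exact this.ne hx2
    have hsub : insert (u₂ * X.max' hX) (X.image (u₁ * ·)) ⊆ U * X := by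
      intro z hz
      rcases Finset.mem_insert.mp hz with rfl | hz
      · exact Finset.mul_mem_mul h2 hM
      · obtain ⟨x, hx, rfl⟩ := Finset.mem_image.mp hz
        exact Finset.mul_mem_mul h1 hx
    calc X.card + 1 = (X.image (u₁ * ·)).card + 1 := by
          rw [Finset.card_image_of_injective _ (aux_injL hl u₁)]
      _ = (insert (u₂ * X.max' hX) (X.image (u₁ * ·))).card :=
          (Finset.card_insert_of_notMem hnot).symm
      _ ≤ (U * X).card := Finset.card_le_card hsub
  rcases hab.lt_or_gt with h | h
  · exact key a b ha hb h
  · exact key b a hb ha h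

lemma aux_two_le_card {U : Finset H} (hP : MemPfun U) (h : ¬ IsUnit U) : 2 ≤ U.card := by
  obtain ⟨hne, u, hu, huu⟩ := hP
  have hpos : 1 ≤ U.card := Finset.card_pos.mpr hne
  by_contra hc
  have h1 : U.card = 1 := by omega
  obtain ⟨x, rfl⟩ := Finset.card_eq_one.mp h1
  have hux : u = x := Finset.mem_singleton.mp hu
  subst hux
  exact h (huu.map Finset.singletonMonoidHom)

lemma aux_prod_nonempty (l : List (Finset H)) (h : ∀ A ∈ l, A.Nonempty) :
    l.prod.Nonempty := by
  induction l with
  | nil => exact ⟨1, Finset.one_mem_one⟩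
  | cons A t ih =>
      rw [List.prod_cons]
      exact (h A (List.mem_cons_self)).mul (ih fun B hB => h B (List.mem_cons_of_mem _ hB))

end Aux

/-- If `H` is a linearly orderable monoid, then: the power monoid `P_fin(H)` is strongly
unit-cancellative; the map `X ↦ |X| - 1` is a length function on the restricted power
monoid `P_fun(H)`; and `P_fun(H)` is a BF-monoid. -/
theorem stmt_9 {H : Type*} [Monoid H] [LinearOrder H] [DecidableEq H]
    (hr : ∀ x y z : H, x < y → x * z < y * z)
    (hl : ∀ x y z : H, x < y → z * x < z * y) :
    (∀ X Y : Finset H, X.Nonempty → Y.Nonempty → (X * Y = X ∨ Y * X = X) → Y = 1) ∧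
    (∀ U X V : Finset H, MemPfun U → MemPfun X → MemPfun V →
      (¬ IsUnit U ∨ ¬ IsUnit V) → X.card - 1 < (U * X * V).card - 1) ∧
    (∀ X : Finset H, MemPfun X → ¬ IsUnit X →
      (∃ l : List (Finset H), (∀ A ∈ l, IsAtomPfun A) ∧ l.prod = X) ∧
      {k : ℕ | ∃ l : List (Finset H),
        l.length = k ∧ (∀ A ∈ l, IsAtomPfun A) ∧ l.prod = X}.Finite) := by
  refine ⟨?_, ?_, ?_⟩
  · -- strong unit-cancellativity
    intro X Y hX hY hXY
    have key : ∀ y ∈ Y, y = 1 := by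
      rcases hXY with h | h
      · have hMN : X.max' hX * Y.max' hY ∈ X := by
          have hh := Finset.mul_mem_mul (X.max'_mem hX) (Y.max'_mem hY)
          rwa [h] at hh
        have hmn : X.min' hX * Y.min' hY ∈ X := by
          have hh := Finset.mul_mem_mul (X.min'_mem hX) (Y.min'_mem hY)
          rwa [h] at hh
        have h1 : Y.max' hY ≤ 1 := by
          by_contra hc
          push_neg at hc
          have h2 := hl 1 (Y.max' hY) (X.max' hX) hc
          rw [mul_one] at h2
          exact absurd (X.le_max' _ hMN) (lt_of_lt_of_le h2 le_rfl).not_ge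
        have h2 : 1 ≤ Y.min' hY := by
          by_contra hc
          push_neg at hc
          have h3 := hl (Y.min' hY) 1 (X.min' hX) hc
          rw [mul_one] at h3
          exact absurd (X.min'_le _ hmn) h3.not_ge
        intro y hy
        exact le_antisymm ((Y.le_max' y hy).trans h1) (h2.trans (Y.min'_le y hy))
      · have hMN : Y.max' hY * X.max' hX ∈ X := by
          have hh := Finset.mul_mem_mul (Y.max'_mem hY) (X.max'_mem hX)
          rwa [h] at hh
        have hmn : Y.min' hY * X.min' hX ∈ X := by
          have hh := Finset.mul_mem_mul (Y.min'_mem hY) (X.min'_mem hX)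
          rwa [h] at hh
        have h1 : Y.max' hY ≤ 1 := by
          by_contra hc
          push_neg at hc
          have h2 := hr 1 (Y.max' hY) (X.max' hX) hc
          rw [one_mul] at h2
          exact absurd (X.le_max' _ hMN) h2.not_ge
        have h2 : 1 ≤ Y.min' hY := by
          by_contra hc
          push_neg at hc
          have h3 := hr (Y.min' hY) 1 (X.min' hX) hc
          rw [one_mul] at h3
          exact absurd (X.min'_le _ hmn) h3.not_ge
        intro y hy
        exact le_antisymm ((Y.le_max' y hy).trans h1) (h2.trans (Y.min'_le y hy))
    ext y
    simp only [Finset.mem_one]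
    constructor
    · exact key y
    · rintro rfl
      obtain ⟨y, hy⟩ := hY
      exact key y hy ▸ hy
  · -- length function
    intro U X V hU hX hV hor
    have hXne := hX.1
    have hUne := hU.1
    have hVne := hV.1
    have hXcard : 1 ≤ X.card := Finset.card_pos.mpr hXne
    have key : X.card + 1 ≤ (U * X * V).card := by
      rcases hor with h | h
      · have hU2 : 2 ≤ U.card := aux_two_le_card hU h
        calc X.card + 1 ≤ (U * X).card := aux_add_one_le_mulL hr hl hXne hU2
          _ ≤ (U * X * V).card := aux_card_le_mulR hr hVne
      · have hV2 : 2 ≤ V.card := aux_two_le_card hV h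
        have h1 : X.card ≤ (U * X).card := aux_card_le_mulL hl hUne
        have h2 : (U * X).card + 1 ≤ (U * X * V).card :=
          aux_add_one_le_mulR hr hl (hUne.mul hXne) hV2
        omega
    omega
  · -- BF-monoid
    intro X hX hXu
    have exists_fact : ∀ n (X : Finset H), X.card ≤ n → MemPfun X → ¬ IsUnit X →
        ∃ l : List (Finset H), (∀ A ∈ l, IsAtomPfun A) ∧ l.prod = X := by
      intro n
      induction n with
      | zero =>
          intro X hc hP _
          have := Finset.card_pos.mpr hP.1
          omega
      | succ n ih =>
          intro X hc hP hu
          by_cases hatom : IsAtomPfun X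
          · exact ⟨[X], by simpa using hatom, by simp⟩
          · have hsplit : ∃ A B : Finset H, MemPfun A ∧ MemPfun B ∧ X = A * B ∧
                ¬ IsUnit A ∧ ¬ IsUnit B := by
              unfold IsAtomPfun at hatom
              push_neg at hatom
              obtain ⟨A, B, hA, hB, hXAB, hnA, hnB⟩ := hatom hP hu
              exact ⟨A, B, hA, hB, hXAB, hnA, hnB⟩
            obtain ⟨A, B, hA, hB, hXAB, hnA, hnB⟩ := hsplit
            have hA2 : 2 ≤ A.card := aux_two_le_card hA hnA
            have hB2 : 2 ≤ B.card := aux_two_le_card hB hnB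
            have h1 : A.card + 1 ≤ X.card := by
              rw [hXAB]; exact aux_add_one_le_mulR hr hl hA.1 hB2
            have h2 : B.card + 1 ≤ X.card := by
              rw [hXAB]; exact aux_add_one_le_mulL hr hl hB.1 hA2
            obtain ⟨lA, hlA, hlAp⟩ := ih A (by omega) hA hnA
            obtain ⟨lB, hlB, hlBp⟩ := ih B (by omega) hB hnB
            refine ⟨lA ++ lB, ?_, ?_⟩
            · intro C hC
              rcases List.mem_append.mp hC with h | h
              · exact hlA C h
              · exact hlB C h
            · rw [List.prod_append, hlAp, hlBp, hXAB]
    refine ⟨exists_fact X.card X le_rfl hX hXu, ?_⟩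
    have bound : ∀ l : List (Finset H), (∀ A ∈ l, IsAtomPfun A) →
        l.length + 1 ≤ l.prod.card := by
      intro l
      induction l with
      | nil => simp
      | cons A t ih =>
          intro h
          have hA := h A (List.mem_cons_self)
          have ht := ih fun B hB => h B (List.mem_cons_of_mem _ hB)
          have hA2 : 2 ≤ A.card := aux_two_le_card hA.1 hA.2.1
          have htne : t.prod.Nonempty :=
            aux_prod_nonempty t fun B hB => (h B (List.mem_cons_of_mem _ hB)).1.1
          have hle : t.prod.card + 1 ≤ (A * t.prod).card :=
            aux_add_one_le_mulL hr hl htne hA2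
          rw [List.prod_cons, List.length_cons]
          omega
    apply Set.Finite.subset (Set.finite_Iic X.card)
    rintro k ⟨l, hlen, hat, hprod⟩
    have := bound l hat
    rw [hprod] at this
    simp only [Set.mem_Iic]
    omega
end

section
/- Let H be a Dedekind-finite, non-torsion monoid. Then there exists an injective monoid homomorphism Φ from P_fin,0(ℕ) to P_fun(H) such that: Φ maps atoms of P_fin,0(ℕ) to atoms of P_fun(H); L(X) = L(Φ(X)) for every X ∈ P_fin,0(ℕ) (where the sets of lengths are taken in P_fin,0(ℕ) and P_fun(H) respectively); and whenever Φ(X) = Y₁ ⋯ Y_n with Y₁, …, Y_n ∈ P_fun(H), there exist X₁, …, X_n ∈ P_fin,0(ℕ) such that X = X₁ + ⋯ + X_n and Φ(X_i) is associated to Y_i in P_fun(H) for every i. -/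
/-!
Take `Φ X = {x ^ n | n ∈ X}` for an `x` with pairwise distinct powers (a repetition
`x ^ a = x ^ b`, `a < b`, would make the powers periodic, hence finitely many). `Φ` is an
injective homomorphism, and factorizations of `Φ X` in `P_fun(H)` come from decompositions of `X`:
if `Y₁ * Y₂ = Φ X` and `u ∈ Y₁`, `v ∈ Y₂` are units, then `Y₁ v = Φ A` and `u Y₂ = Φ B` with
`A + B = X + c`, where `x ^ c = u v` commutes with all powers of `x`. Writing `A = A' + α` and
`B = B' + β` with `0 ∈ A', B'` gives `X = A' + B'` and `x ^ α * (x ^ β * (u v)⁻¹) = 1`, so by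
Dedekind-finiteness `x ^ α` and `x ^ β` are units and `Y₁`, `Y₂` are associated to `Φ A'`, `Φ B'`.
Dedekind-finiteness also makes the units of `P_fun(H)` the singletons of units, so atoms and
lengths correspond as well.
-/

open Pointwise

/-- `A` is an atom of the restricted power monoid `P_fin,0(ℕ)` of finite subsets of `ℕ`
containing `0`, under set addition. -/
def IsAtom0 (A : Finset ℕ) : Prop :=
  0 ∈ A ∧ A ≠ {0} ∧
    ∀ X Y : Finset ℕ, 0 ∈ X → 0 ∈ Y → A = X + Y → X = {0} ∨ Y = {0}

open Finset

section PowersInjective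

variable {M : Type*} [Monoid M] {x : M}

theorem pow_mem_image_Iio_of_pow_eq {a b : ℕ} (hab : a < b) (h : x ^ a = x ^ b) (n : ℕ) :
    x ^ n ∈ (x ^ ·) '' Set.Iio b := by
  induction n using Nat.strong_induction_on with
  | _ n ih =>
    rcases lt_or_ge n b with hn | hn
    · exact ⟨n, hn, rfl⟩
    · have : x ^ n = x ^ (n - b + a) := by
        rw [pow_add, h, ← pow_add, Nat.sub_add_cancel hn]
      exact this ▸ ih _ (by omega)

theorem injective_pow_of_infinite_range (h : (Set.range (x ^ · : ℕ → M)).Infinite) :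
    Function.Injective (x ^ · : ℕ → M) := by
  intro a b hab
  by_contra hne
  wlog hlt : a < b generalizing a b
  · exact this hab.symm (Ne.symm hne) (by omega)
  refine h (((Set.finite_Iio b).image (x ^ ·)).subset ?_)
  rintro _ ⟨n, rfl⟩
  exact pow_mem_image_Iio_of_pow_eq hlt hab n

end PowersInjective

theorem Finset.add_singleton_eq_image (S : Finset ℕ) (p : ℕ) : S + {p} = S.image (· + p) :=
  image₂_singleton_right

theorem Finset.exists_zero_mem_eq_add_singleton {A : Finset ℕ} (hA : A.Nonempty) :
    ∃ A' : Finset ℕ, ∃ α : ℕ, 0 ∈ A' ∧ A = A' + {α} := by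
  refine ⟨A.image (· - A.min' hA), A.min' hA, mem_image.2 ⟨_, A.min'_mem hA, Nat.sub_self _⟩, ?_⟩
  rw [add_singleton_eq_image, image_image]
  refine ((image_congr fun a ha => ?_).trans image_id).symm
  exact Nat.sub_add_cancel (A.min'_le a ha)

theorem Finset.add_singleton_inj_of_zero_mem {S T : Finset ℕ} {p q : ℕ} (hS : 0 ∈ S)
    (hT : 0 ∈ T) (h : S + {p} = T + {q}) : S = T ∧ p = q := by
  have hle : ∀ {S T : Finset ℕ} {p q : ℕ}, 0 ∈ S → S + {p} = T + {q} → q ≤ p := by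
    intro S T p q hS h
    obtain ⟨t, -, _, hq, hpq⟩ := mem_add.1 (h ▸ add_mem_add hS (mem_singleton_self p))
    rw [mem_singleton] at hq
    omega
  obtain rfl : p = q := le_antisymm (hle hT h.symm) (hle hS h)
  rw [add_singleton_eq_image, add_singleton_eq_image] at h
  exact ⟨image_injective (add_left_injective p) h, rfl⟩

section DedekindFinite

variable {M : Type*} [Monoid M] [IsDedekindFiniteMonoid M] [DecidableEq M]

theorem Finset.isUnit_iff_of_isDedekindFiniteMonoid {s : Finset M} :
    IsUnit s ↔ ∃ a, s = {a} ∧ IsUnit a := by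
  refine ⟨?_, fun ⟨a, hs, ha⟩ => hs ▸ ha.finset⟩
  rintro ⟨u, rfl⟩
  have hmul : ∀ a ∈ (u : Finset M), ∀ b ∈ ((u⁻¹ : (Finset M)ˣ) : Finset M), a * b = 1 :=
    fun a ha b hb => mem_one.1 (u.mul_inv ▸ mul_mem_mul ha hb)
  obtain ⟨a, ha, b, hb, hab⟩ := mem_mul.1 (u.mul_inv ▸ one_mem_one : (1 : M) ∈ _)
  refine ⟨a, eq_singleton_iff_unique_mem.2 ⟨ha, fun a' ha' => ?_⟩, .of_mul_eq_one b hab⟩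
  calc a' = a' * (b * a) := by rw [mul_eq_one_symm hab, mul_one]
    _ = a := by rw [← mul_assoc, hmul a' ha' b hb, one_mul]

end DedekindFinite

section RestrictedPowerMonoid

variable {M : Type*} [Monoid M]

theorem memPfun_singleton {u : M} (hu : IsUnit u) : MemPfun ({u} : Finset M) :=
  ⟨singleton_nonempty u, u, mem_singleton_self u, hu⟩

variable [DecidableEq M]

theorem MemPfun.mul {X Y : Finset M} (hX : MemPfun X) (hY : MemPfun Y) : MemPfun (X * Y) := by
  obtain ⟨hX, u, hu, huU⟩ := hX
  obtain ⟨hY, v, hv, hvU⟩ := hY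
  exact ⟨hX.mul hY, u * v, mul_mem_mul hu hv, huU.mul hvU⟩

theorem memPfun_list_prod {l : List (Finset M)} (h : ∀ Y ∈ l, MemPfun Y) : MemPfun l.prod := by
  induction l with
  | nil => exact memPfun_singleton isUnit_one
  | cons Y l ih =>
    rw [List.forall_mem_cons] at h
    exact h.1.mul (ih h.2)

theorem MemPfun.of_isUnit [IsDedekindFiniteMonoid M] {U : Finset M} (hU : IsUnit U) :
    MemPfun U := by
  obtain ⟨u, rfl, hu⟩ := Finset.isUnit_iff_of_isDedekindFiniteMonoid.1 hU
  exact memPfun_singleton hu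

theorem IsAtomPfun.units_mul_mul [IsDedekindFiniteMonoid M] {Y : Finset M} (hY : IsAtomPfun Y)
    (U V : (Finset M)ˣ) : IsAtomPfun ((U : Finset M) * Y * (V : Finset M)) := by
  obtain ⟨hmem, hnu, hatom⟩ := hY
  refine ⟨((MemPfun.of_isUnit U.isUnit).mul hmem).mul (.of_isUnit V.isUnit), ?_, ?_⟩
  · rwa [Units.isUnit_mul_units, Units.isUnit_units_mul]
  · intro X₁ X₂ h₁ h₂ h
    have hY : Y = (↑U⁻¹ * X₁) * (X₂ * ↑V⁻¹) := by
      rw [mul_assoc, ← mul_assoc X₁, ← h]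
      simp only [mul_assoc, Units.mul_inv, mul_one, Units.inv_mul_cancel_left]
    have h₁' := (MemPfun.of_isUnit U⁻¹.isUnit).mul h₁
    have h₂' := h₂.mul (.of_isUnit V⁻¹.isUnit)
    simpa only [Units.isUnit_units_mul, Units.isUnit_mul_units] using hatom _ _ h₁' h₂' hY

end RestrictedPowerMonoid

section PowImage

variable {M : Type*} [Monoid M] [DecidableEq M]

/-- The embedding `Φ`. -/
def powImage (x : M) (X : Finset ℕ) : Finset M := X.image (x ^ ·)

variable {x : M}

theorem mem_powImage {X : Finset ℕ} {a : M} : a ∈ powImage x X ↔ ∃ n ∈ X, x ^ n = a :=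
  mem_image

theorem powImage_singleton (x : M) (n : ℕ) : powImage x {n} = {x ^ n} :=
  image_singleton _ _

theorem powImage_zero (x : M) : powImage x {0} = 1 := by
  rw [powImage_singleton, pow_zero, singleton_one]

theorem powImage_add (x : M) (X Y : Finset ℕ) :
    powImage x (X + Y) = powImage x X * powImage x Y :=
  image_image₂_distrib fun a b => pow_add x a b

theorem powImage_commute (x : M) (X Y : Finset ℕ) : Commute (powImage x X) (powImage x Y) := by
  rw [Commute, SemiconjBy, ← powImage_add, ← powImage_add, add_comm]

theorem powImage_list_sum (x : M) (l : List (Finset ℕ)) :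
    powImage x l.sum = (l.map (powImage x)).prod := by
  induction l with
  | nil => exact powImage_zero x
  | cons X l ih => rw [List.sum_cons, List.map_cons, List.prod_cons, powImage_add, ih]

theorem memPfun_powImage {X : Finset ℕ} (hX : 0 ∈ X) : MemPfun (powImage x X) :=
  ⟨⟨1, mem_powImage.2 ⟨0, hX, pow_zero x⟩⟩, 1, mem_powImage.2 ⟨0, hX, pow_zero x⟩, isUnit_one⟩

variable (hx : Function.Injective (x ^ · : ℕ → M))
include hx

theorem powImage_injective : Function.Injective (powImage x) :=
  image_injective hx

theorem isUnit_powImage_iff [IsDedekindFiniteMonoid M] {X : Finset ℕ} (hX : 0 ∈ X) :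
    IsUnit (powImage x X) ↔ X = {0} := by
  refine ⟨fun h => ?_, fun h => h ▸ powImage_zero x ▸ isUnit_one⟩
  obtain ⟨a, ha, -⟩ := Finset.isUnit_iff_of_isDedekindFiniteMonoid.1 h
  have hcard : X.card = 1 := by
    rw [← card_image_of_injective X hx, ← powImage, ha, card_singleton]
  obtain ⟨n, rfl⟩ := card_eq_one.1 hcard
  rw [mem_singleton.1 hX]

end PowImage

section Factorization

variable {M : Type*} [Monoid M] [DecidableEq M] [IsDedekindFiniteMonoid M] {x : M}
  (hx : Function.Injective (x ^ · : ℕ → M))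
include hx

theorem exists_add_eq_of_mul_eq_powImage {X : Finset ℕ} (hX : 0 ∈ X) {Y₁ Y₂ : Finset M}
    (h₁ : MemPfun Y₁) (h₂ : MemPfun Y₂) (h : Y₁ * Y₂ = powImage x X) :
    ∃ X₁ X₂ : Finset ℕ, 0 ∈ X₁ ∧ 0 ∈ X₂ ∧ X₁ + X₂ = X ∧
      ∃ U V : Finset M, IsUnit U ∧ IsUnit V ∧
        Y₁ = powImage x X₁ * V ∧ Y₂ = U * powImage x X₂ := by
  obtain ⟨-, _, hu, ⟨u, rfl⟩⟩ := h₁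
  obtain ⟨-, _, hv, ⟨v, rfl⟩⟩ := h₂
  obtain ⟨A, -, hA⟩ := subset_image_iff.1
    (h ▸ mul_subset_mul_left (singleton_subset_iff.2 hv) : Y₁ * {(v : M)} ⊆ powImage x X)
  obtain ⟨B, -, hB⟩ := subset_image_iff.1
    (h ▸ mul_subset_mul_right (singleton_subset_iff.2 hu) : {(u : M)} * Y₂ ⊆ powImage x X)
  change powImage x A = _ at hA
  change powImage x B = _ at hB
  obtain ⟨c, -, hc⟩ := mem_powImage.1 (h ▸ mul_mem_mul hu hv)
  have hY₁ : Y₁ = powImage x A * {↑v⁻¹} := by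
    rw [hA, mul_assoc, singleton_mul_singleton, Units.mul_inv, singleton_one, mul_one]
  have hY₂ : Y₂ = {↑u⁻¹} * powImage x B := by
    rw [hB, ← mul_assoc, singleton_mul_singleton, Units.inv_mul, singleton_one, one_mul]
  have hAB : A + B = X + {c} := powImage_injective hx <| by
    calc powImage x (A + B) = Y₁ * {(v : M)} * powImage x B := by rw [powImage_add, hA]
      _ = Y₁ * {↑u⁻¹} * (powImage x {c} * powImage x B) := by
        rw [powImage_singleton, hc, mul_assoc Y₁ {(↑u⁻¹ : M)}, ← mul_assoc {(↑u⁻¹ : M)},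
          singleton_mul_singleton, Units.inv_mul_cancel_left, mul_assoc]
      _ = powImage x (X + {c}) := by
        rw [(powImage_commute x _ _).eq, powImage_add, ← h, hY₂]
        simp only [mul_assoc]
  have hABne : (A + B).Nonempty := hAB ▸ Nonempty.add ⟨0, hX⟩ (singleton_nonempty c)
  obtain ⟨A', α, hA', rfl⟩ := exists_zero_mem_eq_add_singleton hABne.of_add_left
  obtain ⟨B', β, hB', rfl⟩ := exists_zero_mem_eq_add_singleton hABne.of_add_right
  rw [add_add_add_comm, singleton_add_singleton] at hAB
  obtain ⟨rfl, rfl⟩ := add_singleton_inj_of_zero_mem (zero_add 0 ▸ add_mem_add hA' hB') hX hAB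
  have hxα : x ^ α * (x ^ β * ↑(u * v)⁻¹) = 1 := by
    rw [← mul_assoc, ← pow_add, hc, ← Units.val_mul, Units.mul_inv]
  have hxβ : x ^ β * (x ^ α * ↑(u * v)⁻¹) = 1 := by
    rw [← mul_assoc, ← pow_add, add_comm, hc, ← Units.val_mul, Units.mul_inv]
  refine ⟨A', B', hA', hB', rfl, {↑u⁻¹ * x ^ β}, {x ^ α * ↑v⁻¹},
    (u⁻¹.isUnit.mul (.of_mul_eq_one _ hxβ)).finset,
    ((IsUnit.of_mul_eq_one _ hxα).mul v⁻¹.isUnit).finset, ?_, ?_⟩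
  · rw [hY₁, powImage_add, powImage_singleton, mul_assoc, singleton_mul_singleton]
  · rw [hY₂, powImage_add, (powImage_commute x B' {β}).eq, powImage_singleton, ← mul_assoc,
      singleton_mul_singleton]

end Factorization

theorem List.Forall₂.exists_of_mem_left {α β : Type*} {R : α → β → Prop} {l₁ : List α}
    {l₂ : List β} (h : List.Forall₂ R l₁ l₂) {a : α} (ha : a ∈ l₁) : ∃ b ∈ l₂, R a b := by
  induction h with
  | nil => exact absurd ha List.not_mem_nil
  | cons hab _ ih =>
    rcases List.mem_cons.1 ha with rfl | ha
    · exact ⟨_, List.mem_cons_self, hab⟩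
    · obtain ⟨b, hb, hab⟩ := ih ha
      exact ⟨b, List.mem_cons_of_mem _ hb, hab⟩

section Atoms

variable {M : Type*} [Monoid M] [DecidableEq M] [IsDedekindFiniteMonoid M] {x : M}
  (hx : Function.Injective (x ^ · : ℕ → M))
include hx

theorem isAtomPfun_powImage_iff {A : Finset ℕ} (hA : 0 ∈ A) :
    IsAtomPfun (powImage x A) ↔ IsAtom0 A := by
  constructor
  · rintro ⟨-, hnu, hatom⟩
    refine ⟨hA, fun h => hnu (h ▸ powImage_zero x ▸ isUnit_one), fun P Q hP hQ h => ?_⟩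
    subst h
    exact (hatom _ _ (memPfun_powImage hP) (memPfun_powImage hQ) (powImage_add x P Q)).imp
      (isUnit_powImage_iff hx hP).1 (isUnit_powImage_iff hx hQ).1
  · rintro ⟨-, hne, hmin⟩
    refine ⟨memPfun_powImage hA, mt (isUnit_powImage_iff hx hA).1 hne, fun Y₁ Y₂ h₁ h₂ h => ?_⟩
    obtain ⟨X₁, X₂, h₀₁, h₀₂, rfl, U, V, hU, hV, rfl, rfl⟩ :=
      exists_add_eq_of_mul_eq_powImage hx hA h₁ h₂ h.symm
    rcases hmin X₁ X₂ h₀₁ h₀₂ rfl with rfl | rfl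
    · exact .inl (by rwa [powImage_zero, one_mul])
    · exact .inr (by rwa [powImage_zero, mul_one])

theorem isAtom0_of_isAtomPfun_mul_powImage_mul {Z : Finset ℕ} (hZ : 0 ∈ Z) {U V : Finset M}
    (hU : IsUnit U) (hV : IsUnit V) (h : IsAtomPfun (U * powImage x Z * V)) : IsAtom0 Z := by
  obtain ⟨U, rfl⟩ := hU
  obtain ⟨V, rfl⟩ := hV
  have := h.units_mul_mul U⁻¹ V⁻¹
  rwa [← mul_assoc, Units.inv_mul_cancel_left, Units.mul_inv_cancel_right,
    isAtomPfun_powImage_iff hx hZ] at this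

/-- The unit `W` carries the unit that each step of the induction leaves on the remaining
factors. -/
theorem exists_forall₂_of_units_mul_prod_eq_powImage (l : List (Finset M))
    (hl : ∀ Y ∈ l, MemPfun Y) (W : (Finset M)ˣ) {X : Finset ℕ} (hX : 0 ∈ X)
    (h : ↑W * l.prod = powImage x X) :
    ∃ m : List (Finset ℕ), (∀ Z ∈ m, 0 ∈ Z) ∧ m.sum = X ∧
      List.Forall₂ (fun Z Y => ∃ U V : Finset M, IsUnit U ∧ IsUnit V ∧
        Y = U * powImage x Z * V) m l := by
  induction l generalizing W X with
  | nil =>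
    rw [List.prod_nil, mul_one] at h
    refine ⟨[], List.forall_mem_nil _, ?_, .nil⟩
    rw [List.sum_nil, (isUnit_powImage_iff hx hX).1 (h ▸ W.isUnit)]
    rfl
  | cons Y l ih =>
    rw [List.forall_mem_cons] at hl
    rw [List.prod_cons, ← mul_assoc] at h
    obtain ⟨X₁, X₂, h₀₁, h₀₂, rfl, U, V, hU, hV, hY, hl'⟩ :=
      exists_add_eq_of_mul_eq_powImage hx hX ((MemPfun.of_isUnit W.isUnit).mul hl.1)
        (memPfun_list_prod hl.2) h
    obtain ⟨U, rfl⟩ := hU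
    obtain ⟨m, hm₀, rfl, hm⟩ := ih hl.2 U⁻¹ h₀₂ (by rw [hl', Units.inv_mul_cancel_left])
    refine ⟨X₁ :: m, List.forall_mem_cons.2 ⟨h₀₁, hm₀⟩, List.sum_cons,
      .cons ⟨↑W⁻¹, V, W⁻¹.isUnit, hV, ?_⟩ hm⟩
    rw [mul_assoc, ← hY, Units.inv_mul_cancel_left]

end Atoms

/-- If `H` is a Dedekind-finite, non-torsion monoid, then there is an injective monoid
homomorphism `Φ` from `P_fin,0(ℕ)` to `P_fun(H)` which is atom-preserving, preserves
sets of lengths, and lifts factorizations: whenever `Φ X` is a product of elements of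
`P_fun(H)`, `X` decomposes as a corresponding sum whose images under `Φ` are associated
to the given factors. -/
theorem stmt_11 {H : Type*} [Monoid H] [DecidableEq H]
    (hdf : ∀ x y : H, x * y = 1 → y * x = 1)
    (hnt : ∃ x : H, {y : H | ∃ n : ℕ, 1 ≤ n ∧ x ^ n = y}.Infinite) :
    ∃ Φ : Finset ℕ → Finset H,
      (∀ X : Finset ℕ, 0 ∈ X → MemPfun (Φ X)) ∧
      Φ {0} = 1 ∧
      (∀ X Y : Finset ℕ, 0 ∈ X → 0 ∈ Y → Φ (X + Y) = Φ X * Φ Y) ∧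
      (∀ X Y : Finset ℕ, 0 ∈ X → 0 ∈ Y → Φ X = Φ Y → X = Y) ∧
      (∀ A : Finset ℕ, IsAtom0 A → IsAtomPfun (Φ A)) ∧
      (∀ X : Finset ℕ, 0 ∈ X → ∀ k : ℕ,
        ((∃ l : List (Finset ℕ), l.length = k ∧ (∀ A ∈ l, IsAtom0 A) ∧ l.sum = X) ↔
          (∃ l : List (Finset H), l.length = k ∧ (∀ A ∈ l, IsAtomPfun A) ∧
            l.prod = Φ X))) ∧
      (∀ X : Finset ℕ, 0 ∈ X → ∀ l : List (Finset H),
        (∀ Y ∈ l, MemPfun Y) → l.prod = Φ X →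
        ∃ m : List (Finset ℕ), (∀ Z ∈ m, 0 ∈ Z) ∧ m.sum = X ∧
          List.Forall₂ (fun Z Y =>
            ∃ U V : Finset H, IsUnit U ∧ IsUnit V ∧ Y = U * Φ Z * V) m l) := by
  have : IsDedekindFiniteMonoid H := ⟨hdf _ _⟩
  obtain ⟨x, hx⟩ := hnt
  have hx : Function.Injective (x ^ · : ℕ → H) := injective_pow_of_infinite_range <|
    hx.mono <| by rintro _ ⟨n, -, rfl⟩; exact ⟨n, rfl⟩
  have lift X (hX : 0 ∈ X) l (hl : ∀ Y ∈ l, MemPfun Y) (h : l.prod = powImage x X) :=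
    exists_forall₂_of_units_mul_prod_eq_powImage hx l hl 1 hX (by rwa [Units.val_one, one_mul])
  refine ⟨powImage x, fun _ => memPfun_powImage, powImage_zero x, fun X Y _ _ => powImage_add x X Y,
    fun _ _ _ _ h => powImage_injective hx h, fun A hA => (isAtomPfun_powImage_iff hx hA.1).2 hA,
    fun X hX k => ⟨?_, ?_⟩, lift⟩
  · rintro ⟨l, rfl, hl, rfl⟩
    refine ⟨l.map (powImage x), l.length_map _, List.forall_mem_map.2 fun A hA => ?_,
      (powImage_list_sum x l).symm⟩
    exact (isAtomPfun_powImage_iff hx (hl A hA).1).2 (hl A hA)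
  · rintro ⟨l, rfl, hl, h⟩
    obtain ⟨m, hm₀, hsum, hm⟩ := lift X hX l (fun Y hY => (hl Y hY).1) h
    refine ⟨m, hm.length_eq, fun Z hZ => ?_, hsum⟩
    obtain ⟨Y, hY, U, V, hU, hV, rfl⟩ := hm.exists_of_mem_left hZ
    exact isAtom0_of_isAtomPfun_mul_powImage_mul hx (hm₀ Z hZ) hU hV (hl _ hY)
end

section
/- A 3-element set A belonging to P_fin,0(ℕ) fails to be an atom of P_fin,0(ℕ) if and only if A = {0, x, 2x} for some integer x ≥ 1. -/
/-!
If `A = X + Y` with `0 ∈ X, Y` and nonzero `a ∈ X`, `b ∈ Y`, then `A` contains the three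
distinct elements `0 < a < a + b` and also `b`; when `|A| = 3` this forces `b = a` and
`A = {0, a, 2a}`. Conversely `{0, x, 2x} = {0, x} + {0, x}`.
-/

open Pointwise

namespace Finset

variable {M : Type*} [DecidableEq M]

theorem exists_mem_ne_of_ne_singleton [Zero M] {X : Finset M} (hX0 : 0 ∈ X) (hX : X ≠ {0}) :
    ∃ a ∈ X, a ≠ 0 := by
  by_contra! h
  exact hX (eq_singleton_iff_unique_mem.2 ⟨hX0, h⟩)

theorem zero_insert_subset_add [AddZeroClass M] {X Y : Finset M} {a b : M} (hX0 : 0 ∈ X)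
    (hY0 : 0 ∈ Y) (ha : a ∈ X) (hb : b ∈ Y) : ({0, a, b, a + b} : Finset M) ⊆ X + Y := by
  have h0 := add_mem_add hX0 hY0
  have ha' := add_mem_add ha hY0
  have hb' := add_mem_add hX0 hb
  simp only [add_zero, zero_add] at h0 ha' hb'
  simp [insert_subset_iff, h0, ha', hb', add_mem_add ha hb]

theorem pair_zero_add_self [AddMonoid M] (x : M) :
    ({0, x} + {0, x} : Finset M) = {0, x, x + x} := by
  rw [insert_eq, union_add, add_union, add_union]
  ext
  simp

end Finset

open Finset

theorem card_zero_insert_add {a b : ℕ} (ha : a ≠ 0) (hb : b ≠ 0) :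
    ({0, a, a + b} : Finset ℕ).card = 3 := by
  rw [card_insert_of_notMem (by simp; omega), card_insert_of_notMem (by simp; omega),
    card_singleton]

theorem exists_eq_zero_insert_two_mul_of_not_isAtom0 {A : Finset ℕ} (h0 : 0 ∈ A)
    (hcard : A.card = 3) (hA : ¬ IsAtom0 A) : ∃ x : ℕ, 1 ≤ x ∧ A = {0, x, 2 * x} := by
  have hA0 : A ≠ {0} := by rintro rfl; simp at hcard
  obtain ⟨X, Y, hX0, hY0, rfl, hX, hY⟩ :
      ∃ X Y : Finset ℕ, 0 ∈ X ∧ 0 ∈ Y ∧ A = X + Y ∧ X ≠ {0} ∧ Y ≠ {0} := by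
    simpa [IsAtom0, h0, hA0] using hA
  obtain ⟨a, haX, ha⟩ := exists_mem_ne_of_ne_singleton hX0 hX
  obtain ⟨b, hbY, hb⟩ := exists_mem_ne_of_ne_singleton hY0 hY
  have hsub := zero_insert_subset_add hX0 hY0 haX hbY
  have heq : ({0, a, a + b} : Finset ℕ) = X + Y := by
    refine eq_of_subset_of_card_le (fun c hc => hsub ?_) (by rw [hcard, card_zero_insert_add ha hb])
    simp only [mem_insert, mem_singleton] at hc ⊢
    tauto
  have hba : b = a := by
    have hbA : b ∈ X + Y := hsub (by simp)
    rw [← heq] at hbA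
    simp only [mem_insert, mem_singleton] at hbA
    omega
  exact ⟨a, by omega, by rw [← heq, hba, two_mul]⟩

theorem not_isAtom0_zero_insert_two_mul {x : ℕ} (hx : 1 ≤ x) : ¬ IsAtom0 {0, x, 2 * x} := by
  rintro ⟨-, -, hsplit⟩
  have hx_mem : x ∈ ({0, x} : Finset ℕ) := by simp
  have hsum : ({0, x, 2 * x} : Finset ℕ) = {0, x} + {0, x} := by
    rw [pair_zero_add_self, two_mul]
  rcases hsplit {0, x} {0, x} (by simp) (by simp) hsum with h | h <;>
  · rw [h, mem_singleton] at hx_mem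
    omega

/-- A 3-element set `A ∈ P_fin,0(ℕ)` fails to be an atom of `P_fin,0(ℕ)` if and only
if `A = {0, x, 2x}` for some `x ≥ 1`. -/
theorem stmt_12 (A : Finset ℕ) (h0 : 0 ∈ A) (hcard : A.card = 3) :
    ¬ IsAtom0 A ↔ ∃ x : ℕ, 1 ≤ x ∧ A = {0, x, 2 * x} := by
  refine ⟨exists_eq_zero_insert_two_mul_of_not_isAtom0 h0 hcard, ?_⟩
  rintro ⟨x, hx, rfl⟩
  exact not_isAtom0_zero_insert_two_mul hx
end

section
/- Let d, ℓ, q be positive integers and let A be a nonempty finite subset of ℕ such that d > ℓq, min A > ℓq, and any two elements of A are congruent modulo d. Then the set ({0, q, 2q, …, ℓq}) ∪ A is NOT an atom of P_fin,0(ℕ) if and only if A = {(ℓ+k)q} for some integer k with 1 ≤ k ≤ ⌈ℓ/2⌉. -/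
/-!
In a factorisation `{0, q, …, ℓq} ∪ A = X + Y`, an element of `A` in one factor forces the other
factor into `{0} ∪ A`: adding to it a nonzero multiple `iq ≤ ℓq < d` would give a second element
of `A` not congruent to it modulo `d`. As `q` must still be a sum, both factors lie in
`{0, q, …, ℓq}`, so `A ⊆ (ℓq, 2ℓq]` is a single point `a = max X + max Y = (ℓ + k)q`. Writing
`(ℓ + 1 - k)q = x + y`, one of `x, y` is a maximum, since otherwise `x + max Y` and `max X + y` both
lie in `{0, …, ℓq}` although they add up to `(2ℓ + 1)q`; this gives `2k ≤ ℓ + 1`. Conversely,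
`{0, …, ℓq} ∪ {(ℓ + k)q} = {0, kq} + ({0, …, (ℓ - k)q} ∪ {ℓq})` when `2k ≤ ℓ + 1`.
-/

open Pointwise

open Finset

theorem not_isAtom0_iff {S : Finset ℕ} (h0 : 0 ∈ S) (hS : S ≠ {0}) :
    ¬ IsAtom0 S ↔ ∃ X Y : Finset ℕ, 0 ∈ X ∧ 0 ∈ Y ∧ S = X + Y ∧ X ≠ {0} ∧ Y ≠ {0} := by
  simp [IsAtom0, h0, hS]

section SplitByModulus

variable {m d : ℕ} {A B X Y : Finset ℕ}

theorem eq_zero_or_mem_of_mem_add_of_mem (hB : ∀ b ∈ B, b ≤ m) (hA : ∀ a ∈ A, m < a)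
    (hmd : m < d) (hcong : ∀ a ∈ A, ∀ b ∈ A, a ≡ b [MOD d]) (hXY : B ∪ A = X + Y)
    (hX0 : 0 ∈ X) {x y : ℕ} (hx : x ∈ X) (hxA : x ∈ A) (hy : y ∈ Y) : y = 0 ∨ y ∈ A := by
  by_contra! ⟨hy0, hyA⟩
  have hyB : y ∈ B := by
    have : y ∈ B ∪ A := hXY ▸ subset_add_right Y hX0 hy
    simpa [hyA] using this
  have hxyA : x + y ∈ A := by
    have : x + y ∈ B ∪ A := hXY ▸ add_mem_add hx hy
    rcases mem_union.1 this with h | h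
    · have := hB _ h; have := hA x hxA; omega
    · exact h
  have hdy : d ∣ y := by
    simpa using (Nat.modEq_iff_dvd' (Nat.le_add_right x y)).1 (hcong x hxA _ hxyA)
  have := Nat.le_of_dvd (Nat.pos_of_ne_zero hy0) hdy
  have := hB y hyB
  omega

theorem subset_of_add_eq (hB : ∀ b ∈ B, b ≤ m) (hA : ∀ a ∈ A, m < a)
    (hmd : m < d) (hcong : ∀ a ∈ A, ∀ b ∈ A, a ≡ b [MOD d]) {b : ℕ} (hb : b ∈ B) (hb0 : b ≠ 0)
    (hXY : B ∪ A = X + Y) (hX0 : 0 ∈ X) (hY0 : 0 ∈ Y) (hY : Y ≠ {0}) : X ⊆ B := by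
  have hYX : B ∪ A = Y + X := by rw [hXY, add_comm]
  intro x hx
  have hxBA : x ∈ B ∪ A := hXY ▸ subset_add_left X hY0 hx
  refine (mem_union.1 hxBA).resolve_right fun hxA => hb0 ?_
  obtain ⟨y, hy, hy0⟩ := ((nontrivial_iff_ne_singleton hY0).2 hY).exists_ne 0
  have hYA : ∀ y ∈ Y, y = 0 ∨ y ∈ A := fun y' hy' =>
    eq_zero_or_mem_of_mem_add_of_mem hB hA hmd hcong hXY hX0 hx hxA hy'
  have hXA : ∀ x ∈ X, x = 0 ∨ x ∈ A := fun x' hx' =>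
    eq_zero_or_mem_of_mem_add_of_mem hB hA hmd hcong hYX hY0 hy
      ((hYA y hy).resolve_left hy0) hx'
  obtain ⟨x', hx', y', hy', rfl⟩ := mem_add.1 (hXY ▸ mem_union_left A hb)
  have := hB _ hb
  rcases hXA x' hx' with rfl | hx'A
  · rcases hYA y' hy' with rfl | hy'A
    · rfl
    · have := hA y' hy'A; omega
  · have := hA x' hx'A; omega

theorem exists_eq_singleton_of_add_eq (hB : ∀ b ∈ B, b ≤ m) (hA : ∀ a ∈ A, m < a)
    (hmd : m < d) (hcong : ∀ a ∈ A, ∀ b ∈ A, a ≡ b [MOD d]) (hAne : A.Nonempty)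
    (hXY : B ∪ A = X + Y) (hX : X ⊆ B) (hY : Y ⊆ B) : ∃ a, A = {a} := by
  have hA2m : ∀ a ∈ A, a ≤ 2 * m := by
    intro a ha
    obtain ⟨x, hx, y, hy, rfl⟩ := mem_add.1 (hXY ▸ mem_union_right B ha)
    have := hB x (hX hx); have := hB y (hY hy); omega
  obtain ⟨a, ha⟩ := hAne
  refine ⟨a, eq_singleton_iff_unique_mem.2 ⟨ha, fun b hb => ?_⟩⟩
  refine ((hcong a ha b hb).eq_of_abs_lt ?_).symm
  have := hA a ha; have := hA b hb; have := hA2m a ha; have := hA2m b hb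
  rw [abs_sub_lt_iff]
  omega

end SplitByModulus

section SingletonTop

variable {m a : ℕ} {B X Y : Finset ℕ}

theorem max'_add_max'_eq (hB : ∀ b ∈ B, b ≤ m) (ha : m < a) (hXY : B ∪ {a} = X + Y)
    (hX : X.Nonempty) (hY : Y.Nonempty) : X.max' hX + Y.max' hY = a := by
  obtain ⟨x, hx, y, hy, hxy⟩ := mem_add.1 (hXY ▸ mem_union_right B (mem_singleton_self a))
  have := X.le_max' x hx; have := Y.le_max' y hy
  rcases mem_union.1 (hXY ▸ add_mem_add (X.max'_mem hX) (Y.max'_mem hY)) with h | h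
  · have := hB _ h; omega
  · exact mem_singleton.1 h

theorem max'_le_or_max'_le (hB : ∀ b ∈ B, b ≤ m) (ha : m < a) (hXY : B ∪ {a} = X + Y)
    (hX : X.Nonempty) (hY : Y.Nonempty) {t : ℕ} (ht : t ∈ X + Y) (hta : 2 * m < t + a) :
    X.max' hX ≤ t ∨ Y.max' hY ≤ t := by
  have hmax := max'_add_max'_eq hB ha hXY hX hY
  have hsmall : ∀ s ∈ X + Y, s ≠ a → s ≤ m := by
    intro s hs hsa
    rw [← hXY, mem_union, mem_singleton] at hs
    exact hB s (hs.resolve_right hsa)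
  obtain ⟨x, hx, y, hy, rfl⟩ := mem_add.1 ht
  by_contra! h
  have := hsmall _ (add_mem_add hx (Y.max'_mem hY)) (by omega)
  have := hsmall _ (add_mem_add (X.max'_mem hX) hy) (by omega)
  omega

end SingletonTop

def multiples (q ℓ : ℕ) : Finset ℕ := (range (ℓ + 1)).image (fun i => q * i)

section Multiples

variable {q ℓ : ℕ}

theorem mem_multiples {n : ℕ} : n ∈ multiples q ℓ ↔ ∃ i ≤ ℓ, q * i = n := by
  simp [multiples]

theorem mul_mem_multiples {i : ℕ} (hi : i ≤ ℓ) : q * i ∈ multiples q ℓ :=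
  mem_multiples.2 ⟨i, hi, rfl⟩

theorem zero_mem_multiples : 0 ∈ multiples q ℓ :=
  mem_multiples.2 ⟨0, Nat.zero_le ℓ, Nat.mul_zero q⟩

theorem le_of_mem_multiples {n : ℕ} (hn : n ∈ multiples q ℓ) : n ≤ ℓ * q := by
  obtain ⟨i, hi, rfl⟩ := mem_multiples.1 hn
  rw [mul_comm]
  exact Nat.mul_le_mul_right q hi

theorem exists_eq_of_multiples_union_singleton_eq_add {a : ℕ} {X Y : Finset ℕ} (hq : 0 < q)
    (ha : ℓ * q < a) (hXY : multiples q ℓ ∪ {a} = X + Y) (hX : X ⊆ multiples q ℓ)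
    (hY : Y ⊆ multiples q ℓ) : ∃ k, 1 ≤ k ∧ k ≤ (ℓ + 1) / 2 ∧ a = (ℓ + k) * q := by
  have hXYne : (X + Y).Nonempty := hXY ▸ ⟨a, mem_union_right _ (mem_singleton_self a)⟩
  have hXne := hXYne.of_add_left
  have hYne := hXYne.of_add_right
  have hB : ∀ b ∈ multiples q ℓ, b ≤ ℓ * q := fun b => le_of_mem_multiples
  obtain ⟨u, hu, hxu⟩ := mem_multiples.1 (hX (X.max'_mem hXne))
  obtain ⟨v, hv, hyv⟩ := mem_multiples.1 (hY (Y.max'_mem hYne))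
  have hsum : q * (u + v) = a := by
    rw [Nat.mul_add, hxu, hyv, max'_add_max'_eq hB ha hXY hXne hYne]
  have hℓuv : ℓ < u + v := Nat.lt_of_mul_lt_mul_left (by rw [hsum, mul_comm]; exact ha)
  -- With `k = u + v - ℓ`, the element `(ℓ + 1 - k) q` of `multiples q ℓ` forces `2k ≤ ℓ + 1`.
  refine ⟨u + v - ℓ, by omega, ?_, by rw [← hsum, mul_comm]; congr 1; omega⟩
  have ht : q * (2 * ℓ + 1 - (u + v)) ∈ X + Y :=
    hXY ▸ mem_union_left _ (mul_mem_multiples (by omega))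
  have hta : 2 * (ℓ * q) < q * (2 * ℓ + 1 - (u + v)) + a := by
    rw [← hsum, ← Nat.mul_add, Nat.sub_add_cancel (by omega)]
    have : q * (2 * ℓ + 1) = 2 * (ℓ * q) + q := by ring
    omega
  rcases max'_le_or_max'_le hB ha hXY hXne hYne ht hta with h | h
  · have := Nat.le_of_mul_le_mul_left (hxu ▸ h) hq; omega
  · have := Nat.le_of_mul_le_mul_left (hyv ▸ h) hq; omega

theorem range_union_singleton_eq_add {k : ℕ} (hk : k ≤ (ℓ + 1) / 2) :
    range (ℓ + 1) ∪ {ℓ + k} = {0, k} + (range (ℓ - k + 1) ∪ {ℓ}) := by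
  ext n
  simp only [mem_union, mem_range, mem_singleton, mem_add, mem_insert]
  constructor
  · rintro (hn | rfl)
    · by_cases hnk : n ≤ ℓ - k
      · exact ⟨0, Or.inl rfl, n, Or.inl (by omega), by omega⟩
      · exact ⟨k, Or.inr rfl, n - k, Or.inl (by omega), by omega⟩
    · exact ⟨k, Or.inr rfl, ℓ, Or.inr rfl, by omega⟩
  · rintro ⟨x, hx, y, hy, rfl⟩
    omega

theorem multiples_union_singleton_eq_add {k : ℕ} (hk : k ≤ (ℓ + 1) / 2) :
    multiples q ℓ ∪ {(ℓ + k) * q} = {0, q * k} + (multiples q (ℓ - k) ∪ {q * ℓ}) := by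
  have h := congrArg (image (AddMonoidHom.mulLeft q)) (range_union_singleton_eq_add hk)
  rw [image_add] at h
  simpa [image_union, image_insert, multiples, mul_comm q (ℓ + k)] using h

end Multiples

theorem stmt_13_general (d ℓ q : ℕ) (hℓ : 0 < ℓ) (hq : 0 < q)
    (A : Finset ℕ) (hA : A.Nonempty)
    (hdq : ℓ * q < d) (hmin : ∀ a ∈ A, ℓ * q < a)
    (hcong : ∀ a ∈ A, ∀ b ∈ A, a % d = b % d) :
    ¬ IsAtom0 ((Finset.range (ℓ + 1)).image (fun i => q * i) ∪ A) ↔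
      ∃ k : ℕ, 1 ≤ k ∧ k ≤ (ℓ + 1) / 2 ∧ A = {(ℓ + k) * q} := by
  change ¬ IsAtom0 (multiples q ℓ ∪ A) ↔ _
  have hB : ∀ b ∈ multiples q ℓ, b ≤ ℓ * q := fun b => le_of_mem_multiples
  have hS : multiples q ℓ ∪ A ≠ {0} := by
    obtain ⟨a, ha⟩ := hA
    intro h
    have haS : a ∈ multiples q ℓ ∪ A := mem_union_right _ ha
    rw [h, mem_singleton] at haS
    have := hmin a ha
    omega
  rw [not_isAtom0_iff (mem_union_left A zero_mem_multiples) hS]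
  constructor
  · rintro ⟨X, Y, hX0, hY0, hXY, hXne, hYne⟩
    have hq1 : q ∈ multiples q ℓ := by simpa using mul_mem_multiples (q := q) hℓ
    have hX := subset_of_add_eq hB hmin hdq hcong hq1 hq.ne' hXY hX0 hY0 hYne
    have hY :=
      subset_of_add_eq hB hmin hdq hcong hq1 hq.ne' (hXY.trans (add_comm X Y)) hY0 hX0 hXne
    obtain ⟨a, rfl⟩ := exists_eq_singleton_of_add_eq hB hmin hdq hcong hA hXY hX hY
    obtain ⟨k, hk1, hk, rfl⟩ :=
      exists_eq_of_multiples_union_singleton_eq_add hq (hmin a (mem_singleton_self a)) hXY hX hY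
    exact ⟨k, hk1, hk, rfl⟩
  · rintro ⟨k, hk1, hk, rfl⟩
    refine ⟨{0, q * k}, multiples q (ℓ - k) ∪ {q * ℓ}, mem_insert_self 0 _,
      mem_union_left _ zero_mem_multiples, multiples_union_singleton_eq_add hk, ?_, ?_⟩
    · intro h
      have hqk : q * k ∈ ({0, q * k} : Finset ℕ) := mem_insert_of_mem (mem_singleton_self _)
      rw [h, mem_singleton] at hqk
      exact (Nat.mul_pos hq hk1).ne' hqk
    · intro h
      have hqℓ : q * ℓ ∈ multiples q (ℓ - k) ∪ {q * ℓ} := mem_union_right _ (mem_singleton_self _)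
      rw [h, mem_singleton] at hqℓ
      exact (Nat.mul_pos hq hℓ).ne' hqℓ

/-- Let `d, ℓ, q` be positive integers and `A` a nonempty finite subset of `ℕ` with
`min A > ℓq`, `d > ℓq`, and all elements of `A` congruent modulo `d`. Then
`{0, q, 2q, …, ℓq} ∪ A` is not an atom of `P_fin,0(ℕ)` iff `A = {(ℓ+k)q}` for some
`1 ≤ k ≤ ⌈ℓ/2⌉`. -/
theorem stmt_13 (d ℓ q : ℕ) (hd : 0 < d) (hℓ : 0 < ℓ) (hq : 0 < q)
    (A : Finset ℕ) (hA : A.Nonempty)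
    (hdq : ℓ * q < d) (hmin : ∀ a ∈ A, ℓ * q < a)
    (hcong : ∀ a ∈ A, ∀ b ∈ A, a % d = b % d) :
    ¬ IsAtom0 ((Finset.range (ℓ + 1)).image (fun i => q * i) ∪ A) ↔
      ∃ k : ℕ, 1 ≤ k ∧ k ≤ (ℓ + 1) / 2 ∧ A = {(ℓ + k) * q} :=
  stmt_13_general d ℓ q hℓ hq A hA hdq hmin hcong
end

section
/- Let A ∈ P_fin,0(ℕ) and let b, c be positive integers with b ≠ 2c and 2·(max A) < c < b − max A. Then the set A ∪ (A + b) ∪ {c} is an atom of P_fin,0(ℕ). -/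
open Pointwise

/-!
Write `m = max A`. Every element of `S = A ∪ (A + b) ∪ {c}` lies in `[0, m]`, equals `c`, or
lies in `[b, b + m]`, and `b + m = max S`. If `S = X + Y` with `0 ∈ X, Y`, split the top
element as `b + m = x + y` with `x ∈ X`, `y ∈ Y`; these are the maxima of `X` and `Y`, so
either one of them is at most `m`, or `x = y = c`. A summand contained in `[0, m]` must be
`{0}`: `c` can only arise as `0 + c`, and then `u + c ∈ S` forces `u = 0`. The case `x = y = c`
is impossible, because `b ∈ S` would be a sum of two elements of `[0, m] ∪ {c}`, and such sums
are at most `2m`, lie in `[c, c + m]`, or equal `2c`.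
-/

open Finset

theorem le_of_add_eq_of_forall_mem_add_le {X Y : Finset ℕ} {N x y : ℕ}
    (hN : ∀ s ∈ X + Y, s ≤ N) (hy : y ∈ Y) (hxy : x + y = N) {u : ℕ} (hu : u ∈ X) : u ≤ x := by
  have := hN _ (add_mem_add hu hy)
  omega

section Gaps

variable {X Y : Finset ℕ} {m b c : ℕ}

theorem eq_singleton_zero_of_forall_le (hmc : 2 * m < c) (hcb : c + m < b)
    (hS : ∀ s ∈ X + Y, s ≤ m ∨ s = c ∨ b ≤ s) (hc : c ∈ X + Y) (hX0 : 0 ∈ X)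
    (hX : ∀ u ∈ X, u ≤ m) : X = {0} := by
  have hcY : c ∈ Y := by
    obtain ⟨u, hu, v, hv, huv⟩ := mem_add.mp hc
    have := hX u hu
    rcases hS v (subset_add_right Y hX0 hv) with hv' | rfl | hv'
    · omega
    · exact hv
    · omega
  refine eq_singleton_iff_unique_mem.mpr ⟨hX0, fun u hu => ?_⟩
  have := hX u hu
  rcases hS _ (add_mem_add hu hcY) with h | h | h <;> omega

theorem notMem_add_of_forall_le_or_eq (hmc : 2 * m < c) (hcb : c + m < b) (hbc : b ≠ 2 * c)
    (hX : ∀ u ∈ X, u ≤ m ∨ u = c) (hY : ∀ v ∈ Y, v ≤ m ∨ v = c) : b ∉ X + Y := by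
  intro hb
  obtain ⟨u, hu, v, hv, rfl⟩ := mem_add.mp hb
  rcases hX u hu with hu' | hu' <;> rcases hY v hv with hv' | hv' <;> omega

end Gaps

theorem isAtom0_of_forall_mem {S : Finset ℕ} {m b c : ℕ} (hmc : 2 * m < c) (hcb : c + m < b)
    (hbc : b ≠ 2 * c) (hS : ∀ s ∈ S, s ≤ m ∨ s = c ∨ b ≤ s) (hSle : ∀ s ∈ S, s ≤ b + m)
    (h0 : 0 ∈ S) (hc : c ∈ S) (hb : b ∈ S) (htop : b + m ∈ S) : IsAtom0 S := by
  refine ⟨h0, ?_, ?_⟩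
  · rintro rfl
    simp only [mem_singleton] at hc
    omega
  rintro X Y hX0 hY0 rfl
  obtain ⟨x, hx, y, hy, hxy⟩ := mem_add.mp htop
  have hXx : ∀ u ∈ X, u ≤ x := fun u => le_of_add_eq_of_forall_mem_add_le hSle hy hxy
  have hYy : ∀ v ∈ Y, v ≤ y := fun v => le_of_add_eq_of_forall_mem_add_le
    (add_comm X Y ▸ hSle) hx ((add_comm y x).trans hxy)
  have hYX : Y + X = X + Y := add_comm Y X
  have hX_of_le : x ≤ m → X = {0} := fun hxm =>
    eq_singleton_zero_of_forall_le hmc hcb hS hc hX0 fun u hu => (hXx u hu).trans hxm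
  have hY_of_le : y ≤ m → Y = {0} := fun hym =>
    eq_singleton_zero_of_forall_le hmc hcb (hYX ▸ hS) (hYX ▸ hc) hY0
      fun v hv => (hYy v hv).trans hym
  rcases hS x (subset_add_left X hY0 hx) with hxm | hxc | hbx
  · exact Or.inl (hX_of_le hxm)
  rcases hS y (subset_add_right Y hX0 hy) with hym | hyc | hby
  · exact Or.inr (hY_of_le hym)
  · have hlow : ∀ s ∈ X + Y, s ≤ c → s ≤ m ∨ s = c := fun s hs hsc => by
      rcases hS s hs with h | h | h <;> omega
    exact absurd hb (notMem_add_of_forall_le_or_eq hmc hcb hbc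
      (fun u hu => hlow u (subset_add_left X hY0 hu) (hxc ▸ hXx u hu))
      (fun v hv => hlow v (subset_add_right Y hX0 hv) (hyc ▸ hYy v hv)))
  · omega
  · exact Or.inr (hY_of_le (by omega))

theorem stmt_14_general (A : Finset ℕ) (h0 : 0 ∈ A) (b c : ℕ)
    (hbc : b ≠ 2 * c)
    (h2 : 2 * A.max' ⟨0, h0⟩ < c) (h3 : c + A.max' ⟨0, h0⟩ < b) :
    IsAtom0 (A ∪ A.image (· + b) ∪ {c}) := by
  have hA : ∀ a ∈ A, a ≤ A.max' ⟨0, h0⟩ := A.le_max'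
  refine isAtom0_of_forall_mem h2 h3 hbc ?_ ?_ ?_ ?_ ?_ ?_
  · simp only [mem_union, mem_image, mem_singleton]
    rintro s ((hs | ⟨a, -, rfl⟩) | rfl)
    exacts [Or.inl (hA s hs), Or.inr (Or.inr (Nat.le_add_left b a)), Or.inr (Or.inl rfl)]
  · simp only [mem_union, mem_image, mem_singleton]
    rintro s ((hs | ⟨a, ha, rfl⟩) | rfl)
    · have := hA s hs; omega
    · have := hA a ha; omega
    · omega
  · simp [h0]
  · simp
  · simp [h0]
  · simp only [mem_union, mem_image, mem_singleton]
    exact Or.inl (Or.inr ⟨_, A.max'_mem _, add_comm _ _⟩)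

/-- Let `A ∈ P_fin,0(ℕ)` and let `b, c` be positive integers with `b ≠ 2c` and
`2·max A < c < b - max A`. Then `A ∪ (A + b) ∪ {c}` is an atom of `P_fin,0(ℕ)`. -/
theorem stmt_14 (A : Finset ℕ) (h0 : 0 ∈ A) (b c : ℕ) (hb : 0 < b) (hc : 0 < c)
    (hbc : b ≠ 2 * c)
    (h2 : 2 * A.max' ⟨0, h0⟩ < c) (h3 : c + A.max' ⟨0, h0⟩ < b) :
    IsAtom0 (A ∪ A.image (· + b) ∪ {c}) :=
  stmt_14_general A h0 b c hbc h2 h3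
end

section
/- For every integer n ≥ 2, the set of lengths of the interval {0, 1, …, n} in P_fin,0(ℕ) equals {2, 3, …, n}; equivalently, for an integer k ≥ 1, the set {0, 1, …, n} can be written as a sum of k atoms of P_fin,0(ℕ) if and only if 2 ≤ k ≤ n. -/
/-!
Taking maxima is additive on `P_fin,0(ℕ)` and every atom has maximum at least `1`, so
`{0, …, n}` is a sum of at most `n` atoms; it is not itself an atom, being `{0, 1} + {0, …, n - 1}`.
Conversely, `{0, …, n}` is `B + (k - 1) • {0, 1}` as soon as `B + {0, 1} = {0, …, m}` with
`m = n - k + 2`. Such an atom `B` is `{a} ∪ {even numbers below m}` for the odd `a ∈ {m - 2, m - 1}`: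
`a` is the only odd element of `B`, so it is not a sum of two nonzero elements of `B`, and since
`2a ≥ m`, no `a + y` with `0 ≠ y ∈ B` lies in `B`; this makes `B` an atom.
-/

open Pointwise

open Finset

lemma Finset.sup_id_add {X Y : Finset ℕ} (hX : X.Nonempty) (hY : Y.Nonempty) :
    (X + Y).sup id = X.sup id + Y.sup id := by
  rw [add_def, sup_image, sup_add_sup hX hY]
  rfl

lemma Finset.zero_mem_list_sum {α : Type*} [DecidableEq α] [AddMonoid α] :
    ∀ {l : List (Finset α)}, (∀ A ∈ l, 0 ∈ A) → 0 ∈ l.sum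
  | [], _ => by simp
  | A :: l, h => by
    rw [List.sum_cons, ← add_zero 0]
    exact add_mem_add (h A List.mem_cons_self)
      (zero_mem_list_sum fun B hB ↦ h B (List.mem_cons_of_mem A hB))

lemma Finset.sup_id_list_sum : ∀ {l : List (Finset ℕ)}, (∀ A ∈ l, 0 ∈ A) →
    l.sum.sup id = (l.map (·.sup id)).sum
  | [], _ => by simp
  | A :: l, h => by
    have hl : ∀ B ∈ l, 0 ∈ B := fun B hB ↦ h B (List.mem_cons_of_mem A hB)
    rw [List.sum_cons, List.map_cons, List.sum_cons,
      sup_id_add ⟨0, h A List.mem_cons_self⟩ ⟨0, zero_mem_list_sum hl⟩, sup_id_list_sum hl]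

lemma range_add_range (a b : ℕ) : range (a + 1) + range (b + 1) = range (a + b + 1) := by
  ext z
  simp only [mem_add, mem_range]
  constructor
  · rintro ⟨x, hx, y, hy, rfl⟩
    omega
  · intro hz
    exact ⟨min z a, by omega, z - min z a, by omega, by omega⟩

lemma nsmul_range_two (j : ℕ) : j • range 2 = range (j + 1) := by
  induction j with
  | zero => simp [← singleton_zero]
  | succ j ih => rw [succ_nsmul, ih, range_add_range]

namespace IsAtom0

lemma one_le_sup_id {A : Finset ℕ} (hA : IsAtom0 A) : 1 ≤ A.sup id := by
  obtain ⟨a, ha, ha0⟩ : ∃ a ∈ A, a ≠ 0 := by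
    by_contra! h
    exact hA.2.1 (eq_singleton_iff_unique_mem.2 ⟨hA.1, h⟩)
  exact (Nat.one_le_iff_ne_zero.2 ha0).trans (le_sup (f := id) ha)

lemma length_le_sup_id_sum {l : List (Finset ℕ)} (hl : ∀ A ∈ l, IsAtom0 A) :
    l.length ≤ l.sum.sup id := by
  rw [sup_id_list_sum fun A hA ↦ (hl A hA).1, ← List.length_map (f := (·.sup id))]
  refine List.length_le_sum_of_one_le _ fun i hi ↦ ?_
  obtain ⟨A, hA, rfl⟩ := List.mem_map.1 hi
  exact (hl A hA).one_le_sup_id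

/- A nonzero `a ∈ A` that is not a sum of two nonzero elements of `A` must lie in one of the
summands `X`, `Y`; then `a + Y ⊆ A`, so `Y = {0}`. -/
lemma of_isolated {A : Finset ℕ} {a : ℕ} (h0 : 0 ∈ A) (ha : a ∈ A) (ha0 : a ≠ 0)
    (hirr : ∀ x ∈ A, ∀ y ∈ A, x + y = a → x = 0 ∨ y = 0)
    (hiso : ∀ y ∈ A, a + y ∈ A → y = 0) : IsAtom0 A := by
  have hsummand : ∀ X Y : Finset ℕ, 0 ∈ X → 0 ∈ Y → A = X + Y → a ∈ X → Y = {0} := by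
    intro X Y hX hY hA haX
    refine eq_singleton_iff_unique_mem.2 ⟨hY, fun y hy ↦ ?_⟩
    exact hiso y (hA ▸ subset_add_right Y hX hy) (hA ▸ add_mem_add haX hy)
  refine ⟨h0, fun h ↦ ha0 (by simpa [h] using ha), fun X Y hX hY hA ↦ ?_⟩
  obtain ⟨x, hx, y, hy, rfl⟩ := mem_add.1 (hA ▸ ha)
  rcases hirr x (hA ▸ subset_add_left X hY hx) y (hA ▸ subset_add_right Y hX hy) rfl
    with rfl | rfl
  · exact .inl (hsummand Y X hY hX (by rw [hA, add_comm]) (by simpa using hy))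
  · exact .inr (hsummand X Y hX hY hA (by simpa using hx))

end IsAtom0

def insertEvens (a m : ℕ) : Finset ℕ := insert a ((range m).filter Even)

lemma mem_insertEvens {a m x : ℕ} : x ∈ insertEvens a m ↔ x = a ∨ x < m ∧ x % 2 = 0 := by
  simp [insertEvens, Nat.even_iff]

lemma isAtom0_insertEvens {a m : ℕ} (ha : a % 2 = 1) (hm : 0 < m) (hma : m ≤ 2 * a) :
    IsAtom0 (insertEvens a m) := by
  refine IsAtom0.of_isolated (a := a) (mem_insertEvens.2 (.inr ⟨hm, rfl⟩))
    (mem_insertEvens.2 (.inl rfl)) (by omega) (fun x hx y hy hxy ↦ ?_) fun y hy hay ↦ ?_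
  · rw [mem_insertEvens] at hx hy
    omega
  · rw [mem_insertEvens] at hy hay
    omega

lemma insertEvens_add_range_two {a m : ℕ} (ham : a < m) (hm : m % 2 = 1 ∨ a + 1 = m) :
    insertEvens a m + range 2 = range (m + 1) := by
  ext z
  simp only [mem_add, mem_insertEvens, mem_range]
  constructor
  · rintro ⟨x, hx, y, hy, rfl⟩
    omega
  · intro hz
    rcases Nat.mod_two_eq_zero_or_one z with hz2 | hz2
    · by_cases hzm : z = m
      · exact ⟨a, .inl rfl, 1, by omega, by omega⟩
      · exact ⟨z, .inr ⟨by omega, hz2⟩, 0, by omega, by omega⟩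
    · exact ⟨z - 1, .inr ⟨by omega, by omega⟩, 1, by omega, by omega⟩

lemma isAtom0_range_two : IsAtom0 (range 2) :=
  IsAtom0.of_isolated (a := 1) (by decide) (by decide) one_ne_zero (by decide) (by decide)

lemma exists_isAtom0_add_range_two {m : ℕ} (hm : 2 ≤ m) :
    ∃ B, IsAtom0 B ∧ B + range 2 = range (m + 1) := by
  rcases Nat.mod_two_eq_zero_or_one m with hm2 | hm2
  · exact ⟨insertEvens (m - 1) m, isAtom0_insertEvens (by omega) (by omega) (by omega),
      insertEvens_add_range_two (by omega) (.inr (by omega))⟩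
  -- `insertEvens 1 3 = range 3` is not an atom, so `m = 3` needs its own witness.
  by_cases h3 : m = 3
  · subst h3
    exact ⟨{0, 2}, IsAtom0.of_isolated (a := 2) (by decide) (by decide) two_ne_zero
      (by decide) (by decide), by decide⟩
  · exact ⟨insertEvens (m - 2) m, isAtom0_insertEvens (by omega) (by omega) (by omega),
      insertEvens_add_range_two (by omega) (.inl hm2)⟩

lemma add_range_of_add_range_two {B : Finset ℕ} {m : ℕ} (hB : B + range 2 = range (m + 1))
    (j : ℕ) : B + range (j + 2) = range (m + j + 1) := by
  have hj : range 2 + range (j + 1) = range (j + 2) :=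
    (range_add_range 1 j).trans (by rw [add_comm 1 j])
  rw [← hj, ← add_assoc, hB, range_add_range]

lemma not_isAtom0_range {n : ℕ} (hn : 2 ≤ n) : ¬ IsAtom0 (range (n + 1)) := by
  obtain ⟨j, rfl⟩ : ∃ j, n = j + 1 := ⟨n - 1, by omega⟩
  intro h
  rcases h.2.2 (range 2) (range (j + 1)) (by simp) (by simp)
    (by rw [range_add_range, add_comm 1]) with h | h
  · exact one_ne_zero (mem_singleton.1 (h ▸ mem_range.2 one_lt_two))
  · exact one_ne_zero (mem_singleton.1 (h ▸ mem_range.2 (by omega)))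

/-- For every `n ≥ 2`, the set of lengths of the interval `{0, 1, …, n}` in
`P_fin,0(ℕ)` is `{2, …, n}`: for `k ≥ 1`, the interval is a sum of `k` atoms iff
`2 ≤ k ≤ n`. -/
theorem stmt_15 (n : ℕ) (hn : 2 ≤ n) (k : ℕ) (hk : 1 ≤ k) :
    (∃ l : List (Finset ℕ), l.length = k ∧ (∀ A ∈ l, IsAtom0 A) ∧
      l.sum = Finset.range (n + 1)) ↔ 2 ≤ k ∧ k ≤ n := by
  constructor
  · rintro ⟨l, rfl, hl, hsum⟩
    refine ⟨?_, by simpa [hsum, Nat.range_succ_eq_Iic] using IsAtom0.length_le_sup_id_sum hl⟩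
    by_contra! h
    obtain ⟨A, rfl⟩ := List.length_eq_one_iff.1 (by omega : l.length = 1)
    exact not_isAtom0_range hn (by simpa [← hsum] using hl A (by simp))
  · rintro ⟨hk2, hkn⟩
    obtain ⟨B, hB, hBm⟩ := exists_isAtom0_add_range_two (m := n + 2 - k) (by omega)
    obtain ⟨j, rfl⟩ : ∃ j, k = j + 2 := ⟨k - 2, by omega⟩
    refine ⟨B :: List.replicate (j + 1) (range 2), by simp, ?_, ?_⟩
    · rintro A (_ | ⟨_, hA⟩)
      · exact hB
      · rw [List.eq_of_mem_replicate hA]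
        exact isAtom0_range_two
    · rw [List.sum_cons, List.sum_replicate, nsmul_range_two, add_range_of_add_range_two hBm]
      congr 2
      omega
end

section
/- Let ℓ ≥ 1 and let v₁, …, v_ℓ be positive integers such that v₁ + ⋯ + v_i < v_{i+1}/2 for every 1 ≤ i ≤ ℓ − 2 and, if ℓ ≥ 2, v₁ + ⋯ + v_{ℓ−1} < v_ℓ − v_{ℓ−1}. Then the sumset V = {0, v₁} + ⋯ + {0, v_ℓ} has a unique factorization into atoms of P_fin,0(ℕ): each {0, v_i} is an atom, and whenever V = A₁ + ⋯ + A_k with each A_j an atom of P_fin,0(ℕ), one has k = ℓ and the multiset {A₁, …, A_k} equals the multiset {{0, v₁}, …, {0, v_ℓ}}. -/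
open Pointwise

/-!
Write `Q(S) = ∑_{i ∈ S} {0, v_i}` (`subsetSums v S`) for the set of subset sums. If `m` is the
largest index in `S`, `t = v_m` and `S' = S \ {m}`, the growth conditions make
`Q(S) = Q(S') ∪ (Q(S') + t)` with `Q(S') < t`. In a factorization `X + Y = Q(S)` with `0 ∈ X, Y`
one factor, say `X`, lies below `t`; a second gap, at the top element of `S'`, shows that no sum of
an element of `X` and an element of `Y` below `t` reaches `t`. Hence both the lower part of `Y` and
the part above `t` shifted down by `t` complement `X` to `Q(S')`, so by induction and injectivity of
subset sums they coincide with `Q(S' \ T)` where `X = Q(T)`, and `Y = Q(S \ T)`. Consequently the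
only atoms dividing `Q(S)` are the `{0, v_i}` with `i ∈ S`, and peeling them off one at a time
gives the unique factorization.
-/

open Finset

section AddPair

variable {A P X Y : Finset ℕ} {s t t' z : ℕ}

theorem mem_add_pair_iff : z ∈ A + {0, t} ↔ z ∈ A ∨ t ≤ z ∧ z - t ∈ A := by
  simp only [mem_add, mem_insert, mem_singleton]
  constructor
  · rintro ⟨a, ha, b, rfl | rfl, rfl⟩
    · simpa using Or.inl ha
    · simpa using Or.inr ha
  · rintro (h | ⟨h₁, h₂⟩)
    · exact ⟨z, h, 0, Or.inl rfl, add_zero z⟩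
    · exact ⟨z - t, h₂, t, Or.inr rfl, Nat.sub_add_cancel h₁⟩

theorem mem_of_mem_add_pair_of_lt (hz : z ∈ A + {0, t}) (hzt : z < t) : z ∈ A := by
  rcases mem_add_pair_iff.1 hz with h | h
  · exact h
  · omega

theorem le_or_le_of_mem_add_pair (hA : ∀ a ∈ A, a ≤ s) (hz : z ∈ A + {0, t}) :
    z ≤ s ∨ t ≤ z ∧ z ≤ s + t := by
  rcases mem_add_pair_iff.1 hz with h | ⟨h₁, h₂⟩
  · exact Or.inl (hA z h)
  · have := hA _ h₂
    omega

theorem zero_mem_of_zero_mem_add (h : 0 ∈ X + Y) : 0 ∈ Y := by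
  obtain ⟨x, -, y, hy, hxy⟩ := mem_add.1 h
  rwa [show y = 0 by omega] at hy

noncomputable def shiftDown (Y : Finset ℕ) (t : ℕ) : Finset ℕ :=
  Y.preimage (· + t) (add_left_injective t).injOn

@[simp]
theorem mem_shiftDown : z ∈ shiftDown Y t ↔ z + t ∈ Y :=
  mem_preimage

theorem eq_filter_lt_add_pair (h : Y.filter (· < t) = shiftDown Y t) :
    Y = Y.filter (· < t) + {0, t} := by
  ext z
  rw [mem_add_pair_iff]
  constructor
  · intro hz
    rcases lt_or_ge z t with hzt | hzt
    · exact Or.inl (mem_filter.2 ⟨hz, hzt⟩)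
    · refine Or.inr ⟨hzt, ?_⟩
      rwa [h, mem_shiftDown, Nat.sub_add_cancel hzt]
  · rintro (hz | ⟨hzt, hz⟩)
    · exact (mem_filter.1 hz).1
    · rwa [h, mem_shiftDown, Nat.sub_add_cancel hzt] at hz

theorem forall_lt_or_forall_lt (hP : ∀ p ∈ P, p ≤ s) (hst : s < t)
    (hXY : X + Y = P + {0, t}) : (∀ x ∈ X, x < t) ∨ ∀ y ∈ Y, y < t := by
  by_contra! ⟨⟨x, hx, hxt⟩, y, hy, hyt⟩
  have := le_or_le_of_mem_add_pair hP (hXY ▸ add_mem_add hx hy)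
  omega

theorem add_filter_lt_eq (hP : ∀ p ∈ P, p < t) (hXY : X + Y = P + {0, t})
    (hno : ∀ x ∈ X, ∀ y ∈ Y, y < t → x + y < t) : X + Y.filter (· < t) = P := by
  ext z
  constructor
  · intro hz
    obtain ⟨x, hx, y, hy, rfl⟩ := mem_add.1 hz
    rw [mem_filter] at hy
    exact mem_of_mem_add_pair_of_lt (hXY ▸ add_mem_add hx hy.1) (hno x hx y hy.1 hy.2)
  · intro hz
    obtain ⟨x, hx, y, hy, rfl⟩ := mem_add.1 (hXY ▸ subset_add_left P (by simp) hz)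
    have := hP _ hz
    exact add_mem_add hx (mem_filter.2 ⟨hy, by omega⟩)

theorem add_shiftDown_eq (hP : ∀ p ∈ P, p < t) (hXY : X + Y = P + {0, t})
    (hno : ∀ x ∈ X, ∀ y ∈ Y, y < t → x + y < t) : X + shiftDown Y t = P := by
  ext z
  constructor
  · intro hz
    obtain ⟨x, hx, y, hy, rfl⟩ := mem_add.1 hz
    have hxy : x + (y + t) ∈ P + {0, t} := hXY ▸ add_mem_add hx (mem_shiftDown.1 hy)
    rcases mem_add_pair_iff.1 hxy with h | ⟨-, h⟩
    · have := hP _ h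
      omega
    · simpa [← add_assoc] using h
  · intro hz
    have : z + t ∈ X + Y := hXY ▸ mem_add_pair_iff.2 (Or.inr ⟨by omega, by simpa using hz⟩)
    obtain ⟨x, hx, y, hy, hxy⟩ := mem_add.1 this
    have hty : t ≤ y := by
      by_contra! h
      have := hno x hx y hy h
      omega
    exact mem_add.2 ⟨x, hx, y - t, mem_shiftDown.2 (by rwa [Nat.sub_add_cancel hty]), by omega⟩

theorem add_lt_of_two_mul_lt (hP : ∀ p ∈ P, p ≤ s) (hst : 2 * s < t) (hX0 : 0 ∈ X)
    (hY0 : 0 ∈ Y) (hXY : X + Y = P + {0, t}) (hX : ∀ x ∈ X, x < t) :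
    ∀ x ∈ X, ∀ y ∈ Y, y < t → x + y < t := by
  intro x hx y hy hyt
  have hx' := hP x (mem_of_mem_add_pair_of_lt (hXY ▸ subset_add_left X hY0 hx) (hX x hx))
  have hy' := hP y (mem_of_mem_add_pair_of_lt (hXY ▸ subset_add_right Y hX0 hy) hyt)
  omega

theorem add_lt_of_add_eq_add_pair_add_pair (hP0 : 0 ∈ P) (hP : ∀ p ∈ P, p ≤ s)
    (hs : 2 * s < t') (ht : s + 2 * t' < t) (hX0 : 0 ∈ X) (hY0 : 0 ∈ Y)
    (hXY : X + Y = P + {0, t'} + {0, t}) (hX : ∀ x ∈ X, x < t) :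
    ∀ x ∈ X, ∀ y ∈ Y, y < t → x + y < t := by
  have hP' : ∀ p ∈ P + {0, t'}, p ≤ s + t' := fun p hp => by
    rcases le_or_le_of_mem_add_pair hP hp with h | h <;> omega
  have below : ∀ z ∈ X + Y, z < t → z ≤ s ∨ t' ≤ z ∧ z ≤ s + t' := fun z hz hzt =>
    le_or_le_of_mem_add_pair hP (mem_of_mem_add_pair_of_lt (hXY ▸ hz) hzt)
  have top : ∀ z ∈ X + Y, z ≤ s + t' ∨ t ≤ z ∧ z ≤ s + t' + t := fun z hz =>
    le_or_le_of_mem_add_pair hP' (hXY ▸ hz)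
  have memX : ∀ x ∈ X, x ∈ X + Y := fun x hx => subset_add_left X hY0 hx
  have memY : ∀ y ∈ Y, y ∈ X + Y := fun y hy => subset_add_right Y hX0 hy
  intro x hx y hy hyt
  by_contra! hxy
  have hx' := below x (memX x hx) (hX x hx)
  have hy' := below y (memY y hy) hyt
  -- `x` and `y` exceed `t'`, which forces the summand of `t' + t ∈ X + Y` lying in `X` to be `t'`
  have ht'X : t' ∈ X := by
    have : t' + t ∈ X + Y :=
      hXY ▸ add_mem_add (by simpa using add_mem_add hP0 (by simp)) (by simp)
    obtain ⟨x₀, hx₀, y₀, hy₀, hsum⟩ := mem_add.1 this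
    have h₁ := below x₀ (memX x₀ hx₀) (hX x₀ hx₀)
    have h₂ : t ≤ y₀ := by
      by_contra! h
      have := below y₀ (memY y₀ hy₀) h
      omega
    have h₃ := top (x + y₀) (add_mem_add hx hy₀)
    obtain rfl : x₀ = t' := by omega
    exact hx₀
  have := below (t' + y) (add_mem_add ht'X hy) (by omega)
  omega

end AddPair

def subsetSums (v : ℕ → ℕ) (S : Finset ℕ) : Finset ℕ :=
  ∑ i ∈ S, {0, v i}

section SubsetSums

variable {v : ℕ → ℕ} {S : Finset ℕ} {i : ℕ}

@[simp]
theorem subsetSums_empty : subsetSums v ∅ = {0} :=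
  rfl

theorem subsetSums_singleton : subsetSums v {i} = {0, v i} :=
  sum_singleton _ _

theorem subsetSums_insert (h : i ∉ S) :
    subsetSums v (insert i S) = subsetSums v S + {0, v i} := by
  rw [subsetSums, sum_insert h, add_comm]
  rfl

theorem zero_mem_subsetSums : 0 ∈ subsetSums v S :=
  sum_induction _ (0 ∈ ·) (fun _ _ ha hb => by simpa using add_mem_add ha hb) (by simp)
    (by simp)

theorem le_sum_of_mem_subsetSums : ∀ z ∈ subsetSums v S, z ≤ ∑ i ∈ S, v i := by
  induction S using Finset.induction_on with
  | empty => simp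
  | insert i S hi ih =>
    intro z hz
    rw [subsetSums_insert hi] at hz
    have := le_or_le_of_mem_add_pair ih hz
    rw [sum_insert hi]
    omega

theorem sum_mem_subsetSums : ∑ i ∈ S, v i ∈ subsetSums v S := by
  induction S using Finset.induction_on with
  | empty => simp
  | insert i S hi ih =>
    rw [subsetSums_insert hi, sum_insert hi, add_comm (v i)]
    exact add_mem_add ih (by simp)

theorem mem_subsetSums_of_mem (h : i ∈ S) : v i ∈ subsetSums v S := by
  rw [← insert_erase h, subsetSums_insert (notMem_erase i S)]
  simpa using add_mem_add (zero_mem_subsetSums (S := S.erase i))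
    (mem_insert_of_mem (mem_singleton_self (v i)))

end SubsetSums

def HasOnlySubsetSplittings (v : ℕ → ℕ) (S : Finset ℕ) : Prop :=
  ∀ X Y : Finset ℕ, 0 ∈ X → 0 ∈ Y → X + Y = subsetSums v S →
    ∃ T ⊆ S, X = subsetSums v T ∧ Y = subsetSums v (S \ T)

theorem hasOnlySubsetSplittings_empty (v : ℕ → ℕ) : HasOnlySubsetSplittings v ∅ := by
  intro X Y hX0 hY0 hXY
  rw [subsetSums_empty] at hXY
  have hX : X = {0} := eq_singleton_iff_unique_mem.2
    ⟨hX0, fun x hx => mem_singleton.1 (hXY ▸ subset_add_left X hY0 hx)⟩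
  have hY : Y = {0} := eq_singleton_iff_unique_mem.2
    ⟨hY0, fun y hy => mem_singleton.1 (hXY ▸ subset_add_right Y hX0 hy)⟩
  exact ⟨∅, empty_subset _, hX, by simpa using hY⟩

structure IsLacunary (ℓ : ℕ) (v : ℕ → ℕ) : Prop where
  pos : ∀ i, 1 ≤ i → i ≤ ℓ → 0 < v i
  grow : ∀ i, 1 ≤ i → i ≤ ℓ - 2 → 2 * (∑ j ∈ Finset.Icc 1 i, v j) < v (i + 1)
  last : 2 ≤ ℓ → (∑ j ∈ Finset.Icc 1 (ℓ - 1), v j) + v (ℓ - 1) < v ℓ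

namespace IsLacunary

variable {ℓ : ℕ} {v : ℕ → ℕ} {S T : Finset ℕ} {i m : ℕ}

theorem two_mul_sum_Ico_lt (hv : IsLacunary ℓ v) (hm : 1 ≤ m) (hmℓ : m < ℓ) :
    2 * ∑ j ∈ Ico 1 m, v j < v m := by
  obtain ⟨k, rfl⟩ : ∃ k, m = k + 1 := ⟨m - 1, by omega⟩
  rcases Nat.eq_zero_or_pos k with rfl | hk
  · simpa using hv.pos 1 le_rfl hmℓ.le
  · rw [Ico_add_one_right_eq_Icc]
    exact hv.grow k hk (by omega)

theorem sum_Ico_lt (hv : IsLacunary ℓ v) (hm : 1 ≤ m) (hmℓ : m ≤ ℓ) :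
    ∑ j ∈ Ico 1 m, v j < v m := by
  rcases hmℓ.lt_or_eq with hlt | rfl
  · have := hv.two_mul_sum_Ico_lt hm hlt
    omega
  · rcases hm.eq_or_lt with rfl | h
    · simpa using hv.pos 1 le_rfl le_rfl
    · have := hv.last h
      rw [← Ico_add_one_right_eq_Icc, Nat.sub_add_cancel hm] at this
      omega

theorem strictMonoOn (hv : IsLacunary ℓ v) : StrictMonoOn v (Set.Icc 1 ℓ) :=
  fun _ hi _ hj hij =>
    (single_le_sum (fun _ _ => Nat.zero_le _) (mem_Ico.2 ⟨hi.1, hij⟩)).trans_lt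
      (hv.sum_Ico_lt (hi.1.trans hij.le) hj.2)

theorem sum_add_lt (hv : IsLacunary ℓ v) (hS : S ⊆ Ico 1 m) (hmℓ : m ≤ ℓ) (hi : i ∈ S) :
    ∑ j ∈ S, v j + v i < v m := by
  have hiI := mem_Ico.1 (hS hi)
  have hSm : ∑ j ∈ S, v j ≤ ∑ j ∈ Ico 1 m, v j := sum_le_sum_of_subset hS
  have hvi : v i ≤ ∑ j ∈ Ico 1 m, v j := single_le_sum (fun _ _ => Nat.zero_le _) (hS hi)
  rcases hmℓ.lt_or_eq with hlt | rfl
  · have := hv.two_mul_sum_Ico_lt (by omega) hlt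
    omega
  · have hlast := hv.last (by omega)
    rw [← Ico_add_one_right_eq_Icc, Nat.sub_add_cancel (by omega)] at hlast
    have : v i ≤ v (m - 1) :=
      hv.strictMonoOn.monotoneOn ⟨hiI.1, by omega⟩ ⟨by omega, by omega⟩ (by omega)
    omega

theorem sum_lt_sum_of_toColex_lt (hv : IsLacunary ℓ v) (hS : S ⊆ Icc 1 ℓ)
    (hT : T ⊆ Icc 1 ℓ) (h : toColex S < toColex T) : ∑ i ∈ S, v i < ∑ i ∈ T, v i := by
  obtain ⟨a, haT, haS, ha⟩ := Colex.toColex_lt_toColex_iff_exists_forall_lt.1 h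
  have haI := mem_Icc.1 (hT haT)
  rw [← sum_sdiff_lt_sum_sdiff]
  calc ∑ i ∈ S \ T, v i ≤ ∑ i ∈ Ico 1 a, v i := sum_le_sum_of_subset fun b hb => by
          obtain ⟨hbS, hbT⟩ := mem_sdiff.1 hb
          exact mem_Ico.2 ⟨(mem_Icc.1 (hS hbS)).1, ha b hbS hbT⟩
    _ < v a := hv.sum_Ico_lt haI.1 haI.2
    _ ≤ ∑ i ∈ T \ S, v i :=
      single_le_sum (fun _ _ => Nat.zero_le _) (mem_sdiff.2 ⟨haT, haS⟩)

theorem sum_injOn (hv : IsLacunary ℓ v) :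
    Set.InjOn (fun S => ∑ i ∈ S, v i) {S | S ⊆ Icc 1 ℓ} := by
  intro S hS T hT h
  by_contra hne
  rcases (show toColex S ≠ toColex T from fun h' => hne (toColex_inj.1 h')).lt_or_gt with
    hlt | hlt
  · exact (hv.sum_lt_sum_of_toColex_lt hS hT hlt).ne h
  · exact (hv.sum_lt_sum_of_toColex_lt hT hS hlt).ne' h

theorem subsetSums_injOn (hv : IsLacunary ℓ v) : Set.InjOn (subsetSums v) {S | S ⊆ Icc 1 ℓ} :=
  fun _ hS _ hT h => hv.sum_injOn hS hT <| le_antisymm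
    (le_sum_of_mem_subsetSums _ (h ▸ sum_mem_subsetSums))
    (le_sum_of_mem_subsetSums _ (h ▸ sum_mem_subsetSums))

theorem subsetSums_eq_singleton_zero (hv : IsLacunary ℓ v) (hT : T ⊆ Icc 1 ℓ) :
    subsetSums v T = {0} ↔ T = ∅ := by
  refine ⟨fun h => eq_empty_of_forall_notMem fun i hi => ?_, by rintro rfl; rfl⟩
  have hvi := h ▸ mem_subsetSums_of_mem hi
  have hiI := mem_Icc.1 (hT hi)
  exact (hv.pos i hiI.1 hiI.2).ne' (mem_singleton.1 hvi)

theorem add_lt_of_add_eq_subsetSums_add_pair {X Y : Finset ℕ} (hv : IsLacunary ℓ v)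
    (hS : S ⊆ Ico 1 m) (hm : 1 ≤ m) (hmℓ : m ≤ ℓ) (hX0 : 0 ∈ X) (hY0 : 0 ∈ Y)
    (hXY : X + Y = subsetSums v S + {0, v m}) (hX : ∀ x ∈ X, x < v m) :
    ∀ x ∈ X, ∀ y ∈ Y, y < v m → x + y < v m := by
  rcases S.eq_empty_or_nonempty with rfl | hne
  · exact add_lt_of_two_mul_lt (s := 0) (by simp) (by simpa using hv.pos m hm hmℓ) hX0 hY0 hXY hX
  · set m' := S.max' hne
    have hm' : m' ∈ S := max'_mem S hne
    have hm'I := mem_Ico.1 (hS hm')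
    have hS' : S.erase m' ⊆ Ico 1 m' := fun i hi =>
      mem_Ico.2 ⟨(mem_Ico.1 (hS (mem_of_mem_erase hi))).1, lt_max'_of_mem_erase_max' S hne hi⟩
    have h₁ : 2 * ∑ i ∈ S.erase m', v i < v m' :=
      (Nat.mul_le_mul_left 2 (sum_le_sum_of_subset hS')).trans_lt
        (hv.two_mul_sum_Ico_lt hm'I.1 (by omega))
    have h₂ := hv.sum_add_lt hS hmℓ hm'
    rw [← sum_erase_add S v hm'] at h₂
    rw [← insert_erase hm', subsetSums_insert (notMem_erase m' S)] at hXY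
    exact add_lt_of_add_eq_add_pair_add_pair zero_mem_subsetSums le_sum_of_mem_subsetSums h₁
      (by omega) hX0 hY0 hXY hX

theorem hasOnlySubsetSplittings_insert (hv : IsLacunary ℓ v) (hS : S ⊆ Ico 1 m) (hm : 1 ≤ m)
    (hmℓ : m ≤ ℓ) (ih : HasOnlySubsetSplittings v S) :
    HasOnlySubsetSplittings v (insert m S) := by
  have hmS : m ∉ S := fun h => lt_irrefl m (mem_Ico.1 (hS h)).2
  have hSℓ : S ⊆ Icc 1 ℓ := fun i hi => by
    have := mem_Ico.1 (hS hi)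
    exact mem_Icc.2 ⟨this.1, by omega⟩
  have hst : ∑ i ∈ S, v i < v m := (sum_le_sum_of_subset hS).trans_lt (hv.sum_Ico_lt hm hmℓ)
  have hQt : ∀ p ∈ subsetSums v S, p < v m := fun p hp =>
    (le_sum_of_mem_subsetSums p hp).trans_lt hst
  have low : ∀ X Y, 0 ∈ X → 0 ∈ Y → X + Y = subsetSums v S + {0, v m} →
      (∀ x ∈ X, x < v m) →
      ∃ T ⊆ insert m S, X = subsetSums v T ∧ Y = subsetSums v (insert m S \ T) := by
    intro X Y hX0 hY0 hXY hX
    have hno := hv.add_lt_of_add_eq_subsetSums_add_pair hS hm hmℓ hX0 hY0 hXY hX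
    have h₁ := add_filter_lt_eq hQt hXY hno
    have h₂ := add_shiftDown_eq hQt hXY hno
    obtain ⟨T, hT, hXT, hY₁⟩ := ih X _ hX0 (mem_filter.2 ⟨hY0, hv.pos m hm hmℓ⟩) h₁
    obtain ⟨T', hT', hXT', hY₂⟩ :=
      ih X _ hX0 (zero_mem_of_zero_mem_add (h₂ ▸ zero_mem_subsetSums)) h₂
    obtain rfl : T = T' :=
      hv.subsetSums_injOn (hT.trans hSℓ) (hT'.trans hSℓ) (hXT.symm.trans hXT')
    refine ⟨T, hT.trans (subset_insert m S), hXT, ?_⟩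
    rw [insert_sdiff_of_notMem _ (fun h => hmS (hT h)),
      subsetSums_insert (fun h => hmS (mem_sdiff.1 h).1), ← hY₁]
    exact eq_filter_lt_add_pair (hY₁.trans hY₂.symm)
  intro X Y hX0 hY0 hXY
  rw [subsetSums_insert hmS] at hXY
  rcases forall_lt_or_forall_lt le_sum_of_mem_subsetSums hst hXY with hX | hY
  · exact low X Y hX0 hY0 hXY hX
  · obtain ⟨T, hT, hYT, hXT⟩ := low Y X hY0 hX0 (by rw [add_comm, hXY]) hY
    exact ⟨insert m S \ T, sdiff_subset, hXT, by rwa [Finset.sdiff_sdiff_eq_self hT]⟩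

theorem hasOnlySubsetSplittings (hv : IsLacunary ℓ v) (hS : S ⊆ Icc 1 ℓ) :
    HasOnlySubsetSplittings v S := by
  induction S using Finset.induction_on_max with
  | empty => exact hasOnlySubsetSplittings_empty v
  | insert m S hlt ih =>
    rw [insert_subset_iff] at hS
    have hmI := mem_Icc.1 hS.1
    exact hv.hasOnlySubsetSplittings_insert
      (fun i hi => mem_Ico.2 ⟨(mem_Icc.1 (hS.2 hi)).1, hlt i hi⟩) hmI.1 hmI.2 (ih hS.2)

theorem isAtom0_pair (hv : IsLacunary ℓ v) (hi : 1 ≤ i) (hiℓ : i ≤ ℓ) :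
    IsAtom0 {0, v i} := by
  have hiI : {i} ⊆ Icc 1 ℓ := singleton_subset_iff.2 (mem_Icc.2 ⟨hi, hiℓ⟩)
  refine ⟨mem_insert_self 0 _, ?_, fun X Y hX0 hY0 hXY => ?_⟩
  · rw [ne_eq, ← subsetSums_singleton, hv.subsetSums_eq_singleton_zero hiI]
    exact singleton_ne_empty i
  · rw [← subsetSums_singleton] at hXY
    obtain ⟨T, hT, rfl, rfl⟩ := hv.hasOnlySubsetSplittings hiI X Y hX0 hY0 hXY.symm
    rcases subset_singleton_iff.1 hT with rfl | rfl
    · exact Or.inl subsetSums_empty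
    · exact Or.inr (by rw [sdiff_self]; rfl)

theorem eq_singleton_of_isAtom0 {T : Finset ℕ} (hv : IsLacunary ℓ v) (hT : T ⊆ Icc 1 ℓ)
    (h : IsAtom0 (subsetSums v T)) : ∃ i, T = {i} := by
  obtain ⟨i, hi⟩ : T.Nonempty :=
    nonempty_iff_ne_empty.2 fun hT' => h.2.1 ((hv.subsetSums_eq_singleton_zero hT).2 hT')
  refine ⟨i, ?_⟩
  have hsplit := subsetSums_insert (v := v) (notMem_erase i T)
  rw [insert_erase hi] at hsplit
  rcases h.2.2 _ _ zero_mem_subsetSums (mem_insert_self 0 _) hsplit with h' | h'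
  · rw [hv.subsetSums_eq_singleton_zero ((erase_subset i T).trans hT), erase_eq_empty_iff] at h'
    exact h'.resolve_left (nonempty_iff_ne_empty.1 ⟨i, hi⟩)
  · rw [← subsetSums_singleton,
      hv.subsetSums_eq_singleton_zero (singleton_subset_iff.2 (hT hi))] at h'
    exact absurd h' (singleton_ne_empty i)

theorem coe_eq_map_of_sum_eq (hv : IsLacunary ℓ v) :
    ∀ l : List (Finset ℕ), (∀ A ∈ l, IsAtom0 A) →
      ∀ {S : Finset ℕ}, S ⊆ Icc 1 ℓ → l.sum = subsetSums v S →
        (l : Multiset (Finset ℕ)) = S.val.map fun i => {0, v i}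
  | [], _, S, hS, h => by
    rw [(hv.subsetSums_eq_singleton_zero hS).1 h.symm]
    rfl
  | A :: l, hl, S, hS, h => by
    rw [List.forall_mem_cons] at hl
    rw [List.sum_cons] at h
    have hl0 : 0 ∈ l.sum := List.sum_induction (0 ∈ ·)
      (fun _ _ ha hb => by simpa using add_mem_add ha hb) (by simp) fun B hB => (hl.2 B hB).1
    obtain ⟨T, hTS, rfl, hlT⟩ := hv.hasOnlySubsetSplittings hS _ _ hl.1.1 hl0 h
    obtain ⟨i, rfl⟩ := hv.eq_singleton_of_isAtom0 (hTS.trans hS) hl.1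
    rw [sdiff_singleton_eq_erase] at hlT
    rw [← Multiset.cons_coe, coe_eq_map_of_sum_eq hv l hl.2 ((erase_subset i S).trans hS) hlT,
      subsetSums_singleton, erase_val]
    conv_rhs => rw [← Multiset.cons_erase (singleton_subset_iff.1 hTS), Multiset.map_cons]

end IsLacunary

theorem stmt_16_general (ℓ : ℕ) (v : ℕ → ℕ)
    (hpos : ∀ i, 1 ≤ i → i ≤ ℓ → 0 < v i)
    (hgrow : ∀ i, 1 ≤ i → i ≤ ℓ - 2 → 2 * (∑ j ∈ Finset.Icc 1 i, v j) < v (i + 1))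
    (hlast : 2 ≤ ℓ → (∑ j ∈ Finset.Icc 1 (ℓ - 1), v j) + v (ℓ - 1) < v ℓ) :
    (∀ i, 1 ≤ i → i ≤ ℓ → IsAtom0 ({0, v i} : Finset ℕ)) ∧
    ∀ l : List (Finset ℕ), (∀ A ∈ l, IsAtom0 A) →
      l.sum = ∑ i ∈ Finset.Icc 1 ℓ, ({0, v i} : Finset ℕ) →
      l.Perm ((List.range ℓ).map fun i => ({0, v (i + 1)} : Finset ℕ)) := by
  have hv : IsLacunary ℓ v := ⟨hpos, hgrow, hlast⟩
  refine ⟨fun i hi hiℓ => hv.isAtom0_pair hi hiℓ, fun l hl hsum => ?_⟩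
  rw [← Multiset.coe_eq_coe, hv.coe_eq_map_of_sum_eq l hl subset_rfl hsum]
  simp [Nat.Icc_eq_range', List.range'_eq_map_range, Function.comp_def, add_comm]

/-- Let `v₁, …, v_ℓ` be positive integers with `v₁ + ⋯ + v_i < v_{i+1}/2` for
`1 ≤ i ≤ ℓ - 2` and (if `ℓ ≥ 2`) `v₁ + ⋯ + v_{ℓ-1} < v_ℓ - v_{ℓ-1}`. Then each
`{0, v_i}` is an atom of `P_fin,0(ℕ)` and the sumset `{0, v₁} + ⋯ + {0, v_ℓ}` has a
unique factorization into atoms of `P_fin,0(ℕ)`: any list of atoms summing to it is a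
permutation of `{0, v₁}, …, {0, v_ℓ}`. -/
theorem stmt_16 (ℓ : ℕ) (hℓ : 1 ≤ ℓ) (v : ℕ → ℕ)
    (hpos : ∀ i, 1 ≤ i → i ≤ ℓ → 0 < v i)
    (hgrow : ∀ i, 1 ≤ i → i ≤ ℓ - 2 → 2 * (∑ j ∈ Finset.Icc 1 i, v j) < v (i + 1))
    (hlast : 2 ≤ ℓ → (∑ j ∈ Finset.Icc 1 (ℓ - 1), v j) + v (ℓ - 1) < v ℓ) :
    (∀ i, 1 ≤ i → i ≤ ℓ → IsAtom0 ({0, v i} : Finset ℕ)) ∧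
    ∀ l : List (Finset ℕ), (∀ A ∈ l, IsAtom0 A) →
      l.sum = ∑ i ∈ Finset.Icc 1 ℓ, ({0, v i} : Finset ℕ) →
      l.Perm ((List.range ℓ).map fun i => ({0, v (i + 1)} : Finset ℕ)) :=
  stmt_16_general ℓ v hpos hgrow hlast
end
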